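/- arXiv:1812.11259 — 4 statements merged into one kernel-verified Lean document; each statement's English description precedes it below -/
import Mathlib

section
/- Let (A, φ) be a non-commutative probability space and let {(A_{k,l}, A_{k,r}) : k ∈ K} be a family of pairs of (not necessarily unital) subalgebras of A. Then the family is bi-Boolean independent if and only if for every n ≥ 2, every χ : {1,…,n} → {l,r}, every non-constant map ω : {1,…,n} → K, and all elements a_j ∈ A_{ω(j), χ(j)} (j = 1,…,n), the mixed Boolean (l,r)-cumulant vanishes: B_χ(a₁,…,aₙ) = 0. -/
/-!
Bi-interval partitions relative to `χ` are the partitions of `{1, …, n}` into intervals of the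
total order `≺_χ`, so they are parametrised by their sets `C` of cuts (the non-minimal elements
that start a block), and the partition `π_C` has `|C| + 1` blocks. Hence
`B_χ(a) = ∑_C (-1)^|C| m(C)`, where `m(C)` is the product of the moments over the blocks of `π_C`.
Let `D` be the set of cuts of `π_{ω,χ}`, nonempty when `ω` is not constant. A block `V` of `π_C`,
with the order induced by `≺_χ`, is the index set of the restricted problem
`(χ|_V, ω|_V, a|_V)`, whose maximal runs are the blocks of `π_{C ∪ D}` inside `V`; so if
bi-Boolean factorisation holds on every block of `π_C` then `m(C) = m(C ∪ D)`. Toggling a fixed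
element of `D` cancels the terms of `∑_C (-1)^|C| m(C ∪ D)` in pairs, which leaves
`B_χ(a) = φ(a₁⋯aₙ) - m(D)`. Independence therefore kills mixed cumulants; conversely, by induction
on `n` (the blocks of `π_C` are shorter when `C ≠ ∅`), vanishing of the mixed cumulant is exactly
the factorisation `φ(a₁⋯aₙ) = m(D)`.
-/

open scoped BigOperators

/-- Rank realizing the χ-order: left indices in increasing order, then right indices
in decreasing order. `true` stands for `l`, `false` for `r`. -/
def chiRank {n : ℕ} (χ : Fin n → Bool) (i : Fin n) : ℕ :=
  if χ i then (i : ℕ) else 2 * n - (i : ℕ)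

/-- The strict order `≺_χ`. -/
def chiLT {n : ℕ} (χ : Fin n → Bool) (i j : Fin n) : Prop :=
  chiRank χ i < chiRank χ j

/-- A finset is a χ-interval iff it is order-convex for `≺_χ`. -/
def IsChiInterval {n : ℕ} (χ : Fin n → Bool) (V : Finset (Fin n)) : Prop :=
  ∀ i j k : Fin n, i ∈ V → k ∈ V → chiLT χ i j → chiLT χ j k → j ∈ V

/-- A set partition of `{1, …, n}` encoded as a finset of (nonempty) blocks. -/
def IsPartition {n : ℕ} (P : Finset (Finset (Fin n))) : Prop :=
  (∅ ∉ P) ∧ ∀ i : Fin n, ∃! V : Finset (Fin n), V ∈ P ∧ i ∈ V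

open scoped Classical in
/-- The set of bi-interval partitions relative to χ. -/
noncomputable def BIset {n : ℕ} (χ : Fin n → Bool) : Finset (Finset (Finset (Fin n))) :=
  Finset.univ.filter (fun P => IsPartition P ∧ ∀ V ∈ P, IsChiInterval χ V)

/-- `φ_V(a₁,…,aₙ)`: apply φ to the product of the `a_i`, `i ∈ V`, in increasing index order. -/
def phiV {A : Type*} [Monoid A] (φ : A → ℂ) {n : ℕ} (a : Fin n → A) (V : Finset (Fin n)) : ℂ :=
  φ ((V.sort (· ≤ ·)).map a).prod

/-- The Boolean (l,r)-cumulant `B_χ`. -/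
noncomputable def Bcum {A : Type*} [Monoid A] (φ : A → ℂ) {n : ℕ} (χ : Fin n → Bool)
    (a : Fin n → A) : ℂ :=
  ∑ P ∈ BIset χ, (-1 : ℂ) ^ (P.card - 1) * ∏ V ∈ P, phiV φ a V

/-- The list of indices `1, …, n` sorted in the `≺_χ` order. -/
def chiSorted {n : ℕ} (χ : Fin n → Bool) : List (Fin n) :=
  (List.finRange n).mergeSort (fun i j => chiRank χ i ≤ chiRank χ j)

/-- `P` refines `Q`. -/
def Refines {n : ℕ} (P Q : Finset (Finset (Fin n))) : Prop :=
  ∀ V ∈ P, ∃ W ∈ Q, V ⊆ W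

/-- Every block of `P` lies inside a level set of `ω`. -/
def KernelPart {n : ℕ} {K : Type*} (ω : Fin n → K) (P : Finset (Finset (Fin n))) : Prop :=
  ∀ V ∈ P, ∀ i ∈ V, ∀ j ∈ V, ω i = ω j

/-- `P` is the largest bi-interval partition relative to χ all of whose blocks are
contained in level sets of ω, i.e. `P = π_{ω,χ}`. -/
def IsMaxKernelBI {n : ℕ} {K : Type*} (χ : Fin n → Bool) (ω : Fin n → K)
    (P : Finset (Finset (Fin n))) : Prop :=
  P ∈ BIset χ ∧ KernelPart ω P ∧ ∀ Q ∈ BIset χ, KernelPart ω Q → Refines Q P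

/-- Bi-Boolean independence of a family of pairs of non-unital subalgebras. -/
def BiBooleanIndep {A : Type*} [Ring A] [Algebra ℂ A] (φ : A → ℂ) {K : Type*}
    (Al Ar : K → NonUnitalSubalgebra ℂ A) : Prop :=
  ∀ n : ℕ, 1 ≤ n → ∀ χ : Fin n → Bool, ∀ ω : Fin n → K, ∀ a : Fin n → A,
    (∀ i, a i ∈ (if χ i then Al (ω i) else Ar (ω i))) →
    ∀ P : Finset (Finset (Fin n)), IsMaxKernelBI χ ω P →
      φ (List.ofFn a).prod = ∏ V ∈ P, phiV φ a V

open Finset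

section Fibers

variable {α β : Type*} [Fintype α] [DecidableEq β] {f : α → β} {i j k : α}

def fiber (f : α → β) (j : α) : Finset α := univ.filter fun k => f k = f j

@[simp] lemma mem_fiber : k ∈ fiber f j ↔ f k = f j := by simp [fiber]

lemma mem_fiber_self : j ∈ fiber f j := mem_fiber.2 rfl

lemma fiber_eq_fiber_iff : fiber f i = fiber f j ↔ f i = f j := by
  refine ⟨fun h => mem_fiber.1 (h ▸ mem_fiber_self), fun h => ?_⟩
  ext k
  simp [h]

lemma fiber_eq_of_mem (hk : k ∈ fiber f j) : fiber f k = fiber f j :=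
  fiber_eq_fiber_iff.2 (mem_fiber.1 hk)

variable [DecidableEq α] {V : Finset α}

def fibers (f : α → β) : Finset (Finset α) := univ.image (fiber f)

lemma mem_fibers : V ∈ fibers f ↔ ∃ j, fiber f j = V := by simp [fibers]

lemma fiber_mem_fibers (f : α → β) (j : α) : fiber f j ∈ fibers f :=
  mem_fibers.2 ⟨j, rfl⟩

lemma empty_notMem_fibers : ∅ ∉ fibers f := fun h => by
  obtain ⟨j, hj⟩ := mem_fibers.1 h
  exact notMem_empty j (hj ▸ mem_fiber_self)

lemma nonempty_of_mem_fibers (hV : V ∈ fibers f) : V.Nonempty :=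
  nonempty_iff_ne_empty.2 (ne_of_mem_of_not_mem hV empty_notMem_fibers)

lemma existsUnique_mem_fibers (f : α → β) (i : α) : ∃! V, V ∈ fibers f ∧ i ∈ V := by
  refine ⟨fiber f i, ⟨fiber_mem_fibers f i, mem_fiber_self⟩, ?_⟩
  rintro V ⟨hV, hiV⟩
  obtain ⟨j, rfl⟩ := mem_fibers.1 hV
  exact (fiber_eq_of_mem hiV).symm

lemma fibers_congr {γ : Type*} [DecidableEq γ] {g : α → γ} (h : ∀ i j, f i = f j ↔ g i = g j) :
    fibers f = fibers g := by
  have : fiber f = fiber g := by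
    ext j k
    simp only [mem_fiber, h]
  rw [fibers, fibers, this]

lemma card_fibers (f : α → β) : #(fibers f) = #(univ.image f) := by
  have : fiber f = (fun b => univ.filter fun k => f k = b) ∘ f := rfl
  rw [fibers, this, ← image_image]
  refine card_image_of_injOn fun b hb b' _ h => ?_
  obtain ⟨j, -, rfl⟩ := mem_image.1 hb
  have : j ∈ univ.filter fun k => f k = b' := h ▸ mem_filter.2 ⟨mem_univ j, rfl⟩
  exact (mem_filter.1 this).2

lemma prod_fibers_eq_prod_prod {M : Type*} [CommMonoid M] {γ : Type*} [DecidableEq γ]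
    {g : α → γ} (hfg : ∀ i j, f i = f j → g i = g j) (h : Finset α → M) :
    ∏ W ∈ fibers f, h W = ∏ V ∈ fibers g, ∏ W ∈ (fibers f).filter (· ⊆ V), h W := by
  rw [← prod_biUnion]
  · congr 1
    ext W
    simp only [mem_biUnion, mem_filter]
    refine ⟨fun hW => ?_, fun ⟨_, _, hW, _⟩ => hW⟩
    obtain ⟨j, rfl⟩ := mem_fibers.1 hW
    refine ⟨fiber g j, fiber_mem_fibers g j, hW, fun k hk => ?_⟩
    exact mem_fiber.2 (hfg k j (mem_fiber.1 hk))
  · intro V hV V' hV' hne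
    simp only [Function.onFun, disjoint_left, mem_filter]
    rintro W ⟨hW, hWV⟩ ⟨-, hWV'⟩
    obtain ⟨j, rfl⟩ := mem_fibers.1 hW
    obtain ⟨i, rfl⟩ := mem_fibers.1 (mem_coe.1 hV)
    obtain ⟨i', rfl⟩ := mem_fibers.1 (mem_coe.1 hV')
    exact hne ((fiber_eq_of_mem (hWV mem_fiber_self)).symm.trans
      (fiber_eq_of_mem (hWV' mem_fiber_self)))

end Fibers

section BlocksContaining

variable {α β : Type*} [DecidableEq α] {P : Finset (Finset α)} {V : Finset α} {i j : α}

def blocksContaining (P : Finset (Finset α)) (i : α) : Finset (Finset α) := P.filter (i ∈ ·)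

lemma blocksContaining_eq_singleton (hP : ∀ i, ∃! V, V ∈ P ∧ i ∈ V) (hV : V ∈ P) (hj : j ∈ V) :
    blocksContaining P j = {V} := by
  ext W
  simp only [blocksContaining, mem_filter, mem_singleton]
  exact ⟨fun hW => (hP j).unique hW ⟨hV, hj⟩, fun h => h ▸ ⟨hV, hj⟩⟩

variable [Fintype α]

lemma fiber_blocksContaining (hP : ∀ i, ∃! V, V ∈ P ∧ i ∈ V) (hV : V ∈ P) (hj : j ∈ V) :
    fiber (blocksContaining P) j = V := by
  ext k
  rw [mem_fiber, blocksContaining_eq_singleton hP hV hj]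
  refine ⟨fun h => ?_, fun hk => blocksContaining_eq_singleton hP hV hk⟩
  have : V ∈ blocksContaining P k := h ▸ mem_singleton_self V
  exact (mem_filter.1 this).2

lemma fibers_blocksContaining (hP0 : ∅ ∉ P) (hP : ∀ i, ∃! V, V ∈ P ∧ i ∈ V) :
    fibers (blocksContaining P) = P := by
  ext V
  rw [mem_fibers]
  constructor
  · rintro ⟨j, rfl⟩
    obtain ⟨W, ⟨hW, hjW⟩, -⟩ := hP j
    rwa [fiber_blocksContaining hP hW hjW]
  · intro hV
    obtain ⟨j, hj⟩ := nonempty_iff_ne_empty.2 (ne_of_mem_of_not_mem hV hP0)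
    exact ⟨j, fiber_blocksContaining hP hV hj⟩

lemma blocksContaining_fibers_eq_iff [DecidableEq β] {f : α → β} :
    blocksContaining (fibers f) i = blocksContaining (fibers f) j ↔ f i = f j := by
  have hP := existsUnique_mem_fibers f
  rw [blocksContaining_eq_singleton hP (fiber_mem_fibers f i) mem_fiber_self,
    blocksContaining_eq_singleton hP (fiber_mem_fibers f j) mem_fiber_self, singleton_inj,
    fiber_eq_fiber_iff]

end BlocksContaining

lemma Monotone.ordConnected_fiber {α β : Type*} [Preorder α] [Fintype α] [PartialOrder β]
    [DecidableEq β] {f : α → β} (hf : Monotone f) (j : α) : (fiber f j : Set α).OrdConnected :=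
  ⟨fun x hx y hy z hz => by
    simp only [mem_coe, mem_fiber] at hx hy ⊢
    exact le_antisymm (hy ▸ hf hz.2) (hx ▸ hf hz.1)⟩

section IntervalPartition

variable {α β γ : Type*} [LinearOrder α]

def cutsBelow (C : Finset α) (j : α) : Finset α := C.filter (· ≤ j)

section CutsBelow

variable {C D : Finset α} {i j : α}

lemma cutsBelow_eq_iff : cutsBelow C i = cutsBelow C j ↔ ∀ c ∈ C, c ≤ i ↔ c ≤ j := by
  simp only [cutsBelow, Finset.ext_iff, mem_filter]
  exact forall_congr' fun c => ⟨fun h hc => by simpa [hc] using h, fun h => by simp +contextual [h]⟩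

lemma cutsBelow_union_eq_iff :
    cutsBelow (C ∪ D) i = cutsBelow (C ∪ D) j ↔
      cutsBelow C i = cutsBelow C j ∧ cutsBelow D i = cutsBelow D j := by
  simp only [cutsBelow_eq_iff, forall_mem_union]

lemma monotone_cutsBelow (C : Finset α) : Monotone (cutsBelow C) :=
  fun _ _ hij _ hc => by
    simp only [cutsBelow, mem_filter] at hc ⊢
    exact ⟨hc.1, hc.2.trans hij⟩

lemma mem_cutsBelow_self {c : α} (hc : c ∈ C) : c ∈ cutsBelow C c := mem_filter.2 ⟨hc, le_rfl⟩

lemma le_of_cutsBelow_eq {c : α} (hc : c ∈ C) (h : cutsBelow C c = cutsBelow C j) : c ≤ j :=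
  (mem_filter.1 (h ▸ mem_cutsBelow_self hc : c ∈ cutsBelow C j)).2

end CutsBelow

variable [Fintype α]

open Classical in
noncomputable def runCuts (f : α → β) : Finset α := univ.filter fun j => ∃ i, i ⋖ j ∧ f i ≠ f j

section RunCuts

variable {f : α → β} {g : α → γ} {C : Finset α} {i j : α}

lemma mem_runCuts : j ∈ runCuts f ↔ ∃ i, i ⋖ j ∧ f i ≠ f j := by simp [runCuts]

lemma not_isMin_of_mem_runCuts (hj : j ∈ runCuts f) : ¬IsMin j :=
  let ⟨_, hij, _⟩ := mem_runCuts.1 hj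
  not_isMin_of_lt hij.lt

lemma runCuts_congr (h : ∀ i j, f i = f j ↔ g i = g j) : runCuts f = runCuts g := by
  ext j
  simp only [mem_runCuts, ne_eq, h]

lemma cutsBelow_runCuts_eq_iff_of_le (hij : i ≤ j) :
    cutsBelow (runCuts f) i = cutsBelow (runCuts f) j ↔ ∀ k ∈ Set.Icc i j, f k = f i := by
  rw [cutsBelow_eq_iff]
  constructor
  · intro h k hk
    induction k using WellFoundedLT.induction with
    | _ k ih =>
      rcases hk.1.eq_or_lt with rfl | hik
      · rfl
      obtain ⟨p, hip, hpk⟩ := exists_le_covBy_of_lt hik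
      have hpk' : f p = f k := by
        by_contra hne
        exact hik.not_ge ((h k (mem_runCuts.2 ⟨p, hpk, hne⟩)).2 hk.2)
      rw [← hpk']
      exact ih p hpk.lt ⟨hip, hpk.lt.le.trans hk.2⟩
  · intro h c hc
    obtain ⟨p, hpc, hne⟩ := mem_runCuts.1 hc
    refine ⟨fun hci => hci.trans hij, fun hcj => le_of_not_gt fun hic => hne ?_⟩
    exact (h p ⟨hpc.le_of_lt hic, hpc.lt.le.trans hcj⟩).trans (h c ⟨hic.le, hcj⟩).symm

lemma cutsBelow_runCuts_eq_iff :
    cutsBelow (runCuts f) i = cutsBelow (runCuts f) j ↔ ∀ k ∈ Set.uIcc i j, f k = f i := by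
  rcases le_total i j with hij | hji
  · rw [Set.uIcc_of_le hij, cutsBelow_runCuts_eq_iff_of_le hij]
  · rw [eq_comm, Set.uIcc_of_ge hji, cutsBelow_runCuts_eq_iff_of_le hji]
    have hi : i ∈ Set.Icc j i := ⟨hji, le_rfl⟩
    exact ⟨fun h k hk => (h k hk).trans (h i hi).symm,
      fun h k hk => (h k hk).trans (h j ⟨le_rfl, hji⟩).symm⟩

open Classical in
lemma runCuts_subset_filter_not_isMin : runCuts f ⊆ univ.filter fun j => ¬IsMin j :=
  fun _ hj => mem_filter.2 ⟨mem_univ _, not_isMin_of_mem_runCuts hj⟩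

lemma runCuts_eq_empty_iff : runCuts f = ∅ ↔ ∀ i j, f i = f j := by
  refine ⟨fun hempty i j => ((cutsBelow_runCuts_eq_iff.1 ?_) j Set.right_mem_uIcc).symm,
    fun h => eq_empty_of_forall_notMem fun j hj => ?_⟩
  · simp [hempty, cutsBelow]
  · obtain ⟨i, -, hne⟩ := mem_runCuts.1 hj
    exact hne (h i j)

lemma runCuts_cutsBelow (hC : ∀ c ∈ C, ¬IsMin c) : runCuts (cutsBelow C) = C := by
  have key : ∀ {p j : α}, p ⋖ j → (cutsBelow C p = cutsBelow C j ↔ j ∉ C) := by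
    intro p j hpj
    rw [cutsBelow_eq_iff]
    refine ⟨fun h hj => hpj.lt.not_ge ((h j hj).2 le_rfl), fun hj c hc => ?_⟩
    exact ⟨fun hcp => hcp.trans hpj.lt.le,
      fun hcj => hpj.le_of_lt (hcj.lt_of_ne fun hcj' => hj (hcj' ▸ hc))⟩
  ext j
  rw [mem_runCuts]
  refine ⟨fun ⟨p, hpj, hne⟩ => not_not.1 fun hj => hne ((key hpj).2 hj), fun hj => ?_⟩
  obtain ⟨p, hpj⟩ := exists_covBy_of_wellFoundedGT (hC j hj)
  exact ⟨p, hpj, fun h => (key hpj).1 h hj⟩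

end RunCuts

abbrev intervalPartition (C : Finset α) : Finset (Finset α) := fibers (cutsBelow C)

section Partition

variable {C D : Finset α} {V : Finset α}

lemma ordConnected_of_mem_intervalPartition (hV : V ∈ intervalPartition C) :
    (V : Set α).OrdConnected := by
  obtain ⟨j, rfl⟩ := mem_fibers.1 hV
  exact (monotone_cutsBelow C).ordConnected_fiber j

lemma card_intervalPartition [Nonempty α] (hC : ∀ c ∈ C, ¬IsMin c) :
    #(intervalPartition C) = #C + 1 := by
  have hinj : Set.InjOn (cutsBelow C) C := fun c hc c' hc' h =>
    le_antisymm (le_of_cutsBelow_eq hc h) (le_of_cutsBelow_eq hc' h.symm)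
  have himage : univ.image (cutsBelow C) = insert ∅ (C.image (cutsBelow C)) := by
    ext s
    simp only [mem_image, mem_univ, true_and, mem_insert]
    constructor
    · rintro ⟨j, rfl⟩
      rcases (cutsBelow C j).eq_empty_or_nonempty with h | h
      · exact Or.inl h
      refine Or.inr ⟨_, (mem_filter.1 ((cutsBelow C j).max'_mem h)).1, ?_⟩
      rw [cutsBelow_eq_iff]
      refine fun c hc => ⟨fun hcm => hcm.trans (mem_filter.1 ((cutsBelow C j).max'_mem h)).2,
        fun hcj => (cutsBelow C j).le_max' c (mem_filter.2 ⟨hc, hcj⟩)⟩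
    · rintro (rfl | ⟨c, -, rfl⟩)
      · refine ⟨univ.min' univ_nonempty, eq_empty_of_forall_notMem fun c hc => ?_⟩
        obtain ⟨hc, hcm⟩ := mem_filter.1 hc
        exact hC c hc (IsMin.mono (fun b _ => univ.min'_le b (mem_univ b)) hcm)
      · exact ⟨c, rfl⟩
  rw [card_fibers, himage, card_insert_of_notMem, card_image_of_injOn hinj]
  simp only [mem_image, not_exists, not_and]
  exact fun c hc h => notMem_empty c (h ▸ mem_cutsBelow_self hc)

lemma intervalPartition_empty [Nonempty α] : intervalPartition (∅ : Finset α) = {univ} := by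
  have : fiber (cutsBelow (∅ : Finset α)) = fun _ => univ := by
    ext j k
    simp [cutsBelow]
  simp only [intervalPartition, fibers, this, image_const univ_nonempty]

lemma card_lt_of_mem_intervalPartition (hC : ∀ c ∈ C, ¬IsMin c) (hCne : C.Nonempty)
    (hV : V ∈ intervalPartition C) : #V < Fintype.card α := by
  obtain ⟨c, hc⟩ := hCne
  obtain ⟨m, hmc⟩ := not_isMin_iff.1 (hC c hc)
  obtain ⟨j, rfl⟩ := mem_fibers.1 hV
  have hsep : cutsBelow C c ≠ cutsBelow C m := fun h => hmc.not_ge (le_of_cutsBelow_eq hc h)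
  by_cases hm : m ∈ fiber (cutsBelow C) j
  · exact card_lt_univ_of_notMem (x := c) fun hc' =>
      hsep ((mem_fiber.1 hc').trans (mem_fiber.1 hm).symm)
  · exact card_lt_univ_of_notMem hm

lemma prod_intervalPartition_union {M : Type*} [CommMonoid M] (C D : Finset α)
    (h : Finset α → M) :
    ∏ W ∈ intervalPartition (C ∪ D), h W =
      ∏ V ∈ intervalPartition C, ∏ W ∈ (intervalPartition (C ∪ D)).filter (· ⊆ V), h W :=
  prod_fibers_eq_prod_prod (fun _ _ hij => (cutsBelow_union_eq_iff.1 hij).1) h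

variable {P : Finset (Finset α)}

lemma intervalPartition_runCuts_blocksContaining (hP0 : ∅ ∉ P)
    (hP : ∀ i, ∃! V, V ∈ P ∧ i ∈ V) (hconn : ∀ V ∈ P, (V : Set α).OrdConnected) :
    intervalPartition (runCuts (blocksContaining P)) = P := by
  refine (fibers_congr fun i j => ?_).trans (fibers_blocksContaining hP0 hP)
  obtain ⟨V, ⟨hV, hiV⟩, -⟩ := hP i
  have hfib : ∀ k, blocksContaining P k = blocksContaining P i ↔ k ∈ V := fun k => by
    rw [← mem_fiber, fiber_blocksContaining hP hV hiV]
  rw [cutsBelow_runCuts_eq_iff, eq_comm, hfib]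
  exact ⟨fun h => (hfib j).1 (h j Set.right_mem_uIcc),
    fun hj k hk => (hfib k).2 ((hconn V hV).uIcc_subset hiV hj hk)⟩

lemma runCuts_blocksContaining_intervalPartition (hC : ∀ c ∈ C, ¬IsMin c) :
    runCuts (blocksContaining (intervalPartition C)) = C := by
  rw [runCuts_congr fun i j => blocksContaining_fibers_eq_iff, runCuts_cutsBelow hC]

end Partition

end IntervalPartition

lemma OrderEmbedding.image_uIcc {α β : Type*} [LinearOrder α] [LinearOrder β] (e : β ↪o α)
    (he : (Set.range e).OrdConnected) (p q : β) :
    e '' Set.uIcc p q = Set.uIcc (e p) (e q) := by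
  rcases le_total p q with h | h
  · rw [Set.uIcc_of_le h, Set.uIcc_of_le (e.monotone h), e.image_Icc he]
  · rw [Set.uIcc_of_ge h, Set.uIcc_of_ge (e.monotone h), e.image_Icc he]

section Runs

variable {α β γ : Type*} [LinearOrder α] [Fintype α] [LinearOrder β] [Fintype β]
  {f : α → γ} {C : Finset α} {V W : Finset α} {i j : α}

lemma eq_of_mem_intervalPartition_runCuts (hV : V ∈ intervalPartition (runCuts f))
    (hi : i ∈ V) (hj : j ∈ V) : f i = f j := by
  obtain ⟨k, rfl⟩ := mem_fibers.1 hV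
  exact (cutsBelow_runCuts_eq_iff.1 ((mem_fiber.1 hi).trans (mem_fiber.1 hj).symm) j
    Set.right_mem_uIcc).symm

lemma subset_fiber_cutsBelow_runCuts (hW : (W : Set α).OrdConnected) (hi : i ∈ W)
    (hf : ∀ j ∈ W, ∀ k ∈ W, f j = f k) : W ⊆ fiber (cutsBelow (runCuts f)) i :=
  fun k hk => mem_fiber.2 (cutsBelow_runCuts_eq_iff.2 fun _ hm =>
    hf _ (hW.uIcc_subset hk hi hm) k hk)

lemma cutsBelow_runCuts_comp_eq_iff (e : β ↪o α) (he : (Set.range e).OrdConnected) {p q : β} :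
    cutsBelow (runCuts (f ∘ e)) p = cutsBelow (runCuts (f ∘ e)) q ↔
      cutsBelow (runCuts f) (e p) = cutsBelow (runCuts f) (e q) := by
  rw [cutsBelow_runCuts_eq_iff, cutsBelow_runCuts_eq_iff, ← e.image_uIcc he, Set.forall_mem_image]
  rfl

lemma map_fiber_cutsBelow_runCuts_comp (hV : V ∈ intervalPartition C) (e : β ↪o α)
    (he : Set.range e = V) (p : β) :
    (fiber (cutsBelow (runCuts (f ∘ e))) p).map e.toEmbedding =
      fiber (cutsBelow (C ∪ runCuts f)) (e p) := by
  have hconn : (Set.range e).OrdConnected := he ▸ ordConnected_of_mem_intervalPartition hV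
  obtain ⟨j, rfl⟩ := mem_fibers.1 hV
  have hCe : ∀ q, cutsBelow C (e q) = cutsBelow C j := fun q =>
    mem_fiber.1 (mem_coe.1 (he ▸ Set.mem_range_self q))
  ext x
  simp only [mem_map, mem_fiber, cutsBelow_union_eq_iff, RelEmbedding.coe_toEmbedding]
  constructor
  · rintro ⟨q, hq, rfl⟩
    exact ⟨(hCe q).trans (hCe p).symm, (cutsBelow_runCuts_comp_eq_iff e hconn).1 hq⟩
  · rintro ⟨hxC, hxD⟩
    obtain ⟨q, rfl⟩ : x ∈ Set.range e := he ▸ mem_coe.2 (mem_fiber.2 (hxC.trans (hCe p)))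
    exact ⟨q, (cutsBelow_runCuts_comp_eq_iff e hconn).2 hxD, rfl⟩

lemma image_map_intervalPartition_runCuts_comp (hV : V ∈ intervalPartition C) (e : β ↪o α)
    (he : Set.range e = V) :
    (intervalPartition (runCuts (f ∘ e))).image (map e.toEmbedding) =
      (intervalPartition (C ∪ runCuts f)).filter (· ⊆ V) := by
  have hfiber : ∀ k ∈ V, fiber (cutsBelow C) k = V := fun k hk => by
    obtain ⟨j, rfl⟩ := mem_fibers.1 hV
    exact fiber_eq_of_mem hk
  ext W
  simp only [mem_image, mem_filter, mem_fibers]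
  constructor
  · rintro ⟨_, ⟨p, rfl⟩, rfl⟩
    have hp : e p ∈ V := mem_coe.1 (he ▸ Set.mem_range_self p)
    rw [map_fiber_cutsBelow_runCuts_comp hV e he]
    refine ⟨⟨e p, rfl⟩, fun x hx => hfiber (e p) hp ▸ mem_fiber.2 ?_⟩
    exact (cutsBelow_union_eq_iff.1 (mem_fiber.1 hx)).1
  · rintro ⟨⟨k, rfl⟩, hsub⟩
    obtain ⟨p, rfl⟩ : k ∈ Set.range e := he ▸ mem_coe.2 (hsub mem_fiber_self)
    exact ⟨_, ⟨p, rfl⟩, map_fiber_cutsBelow_runCuts_comp hV e he p⟩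

end Runs

lemma Finset.sum_powerset_neg_one_pow_card_mul_eq_sub {ι R : Type*} [DecidableEq ι] [CommRing R]
    {G D : Finset ι} (hDG : D ⊆ G) (hD : D.Nonempty) (m : Finset ι → R)
    (hm : ∀ C ∈ G.powerset, C.Nonempty → m C = m (C ∪ D)) :
    ∑ C ∈ G.powerset, (-1) ^ #C * m C = m ∅ - m D := by
  -- toggling a fixed `d ∈ D` is a sign-reversing involution on the terms `m (C ∪ D)`
  have hcancel : ∑ C ∈ G.powerset, (-1) ^ #C * m (C ∪ D) = 0 := by
    obtain ⟨d, hd⟩ := hD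
    rw [← insert_erase (hDG hd), sum_powerset_insert (notMem_erase d G), ← sum_add_distrib]
    refine sum_eq_zero fun C hC => ?_
    have hdC : d ∉ C := fun h => notMem_erase d G (mem_powerset.1 hC h)
    rw [card_insert_of_notMem hdC, insert_union, insert_eq_of_mem (mem_union_right C hd)]
    ring
  calc ∑ C ∈ G.powerset, (-1) ^ #C * m C
      = ∑ C ∈ G.powerset, (-1) ^ #C * (m C - m (C ∪ D)) +
          ∑ C ∈ G.powerset, (-1) ^ #C * m (C ∪ D) := by
        rw [← sum_add_distrib]
        exact sum_congr rfl fun _ _ => by ring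
    _ = m ∅ - m D := by
        rw [hcancel, add_zero, sum_eq_single_of_mem ∅ (empty_mem_powerset G), card_empty, pow_zero,
          one_mul, empty_union]
        intro C hC hne
        rw [← hm C hC (nonempty_iff_ne_empty.2 hne), sub_self, mul_zero]

lemma chiRank_injective {n : ℕ} (χ : Fin n → Bool) : Function.Injective (chiRank χ) := by
  intro i j h
  have := i.isLt
  have := j.isLt
  apply Fin.ext
  rcases hi : χ i <;> rcases hj : χ j <;> simp [chiRank, hi, hj] at h <;> omega

/-- `Fin n` with the order `≺_χ`; `Fin n` itself keeps the index order, which orders the products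
in `phiV`. Terms of the two types are interchangeable, so below the general order-theoretic lemmas
are applied with `(α := ChiOrder χ)` wherever the goal only mentions `Fin n`. -/
def ChiOrder {n : ℕ} (_χ : Fin n → Bool) : Type := Fin n

section ChiOrder

variable {n m : ℕ} (χ : Fin n → Bool)

instance : PartialOrder (ChiOrder χ) := PartialOrder.lift (chiRank χ) (chiRank_injective χ)

-- Decidable equality is the one of `Fin n`, so that finsets built on either side agree.
instance : LinearOrder (ChiOrder χ) where
  le_total i j := le_total (chiRank χ i) (chiRank χ j)
  toDecidableLE i j := inferInstanceAs (Decidable (chiRank χ i ≤ chiRank χ j))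
  toDecidableEq := inferInstanceAs (DecidableEq (Fin n))

instance : Fintype (ChiOrder χ) := inferInstanceAs (Fintype (Fin n))

instance [NeZero n] : Nonempty (ChiOrder χ) := inferInstanceAs (Nonempty (Fin n))

lemma card_chiOrder : Fintype.card (ChiOrder χ) = n := Fintype.card_fin n

variable {χ}

lemma isChiInterval_iff_ordConnected {V : Finset (ChiOrder χ)} :
    IsChiInterval χ V ↔ (V : Set (ChiOrder χ)).OrdConnected := by
  refine ⟨fun h => ⟨fun x hx y hy z hz => ?_⟩,
    fun h i j k hi hk hij hjk => h.out hi hk ⟨hij.le, hjk.le⟩⟩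
  rcases hz.1.eq_or_lt with rfl | hxz
  · exact hx
  rcases hz.2.eq_or_lt with rfl | hzy
  · exact hy
  exact h x z y hx hy hxz hzy

lemma mem_BIset_iff {P : Finset (Finset (Fin n))} :
    P ∈ BIset χ ↔ IsPartition P ∧ ∀ V ∈ P, IsChiInterval χ V := by
  simp [BIset]

lemma intervalPartition_mem_BIset (C : Finset (ChiOrder χ)) : intervalPartition C ∈ BIset χ :=
  mem_BIset_iff.2
    ⟨⟨empty_notMem_fibers (α := ChiOrder χ), existsUnique_mem_fibers (α := ChiOrder χ) _⟩,
    fun _ hV => isChiInterval_iff_ordConnected.2 (ordConnected_of_mem_intervalPartition hV)⟩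

variable (χ)

lemma chiRank_comp_lt_iff (f : Fin m ↪o Fin n) (i j : Fin m) :
    chiRank (χ ∘ f) i < chiRank (χ ∘ f) j ↔ chiRank χ (f i) < chiRank χ (f j) := by
  have hlt : i < j ↔ f i < f j := f.lt_iff_lt.symm
  have hgt : j < i ↔ f j < f i := f.lt_iff_lt.symm
  have := (f i).isLt
  have := (f j).isLt
  have := i.isLt
  have := j.isLt
  have : m ≤ n := by simpa using Fintype.card_le_of_embedding f.toEmbedding
  simp only [chiRank, Function.comp_apply, Fin.lt_def] at hlt hgt ⊢
  split_ifs <;> omega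

def chiEmb (f : Fin m ↪o Fin n) : ChiOrder (χ ∘ f) ↪o ChiOrder χ :=
  OrderEmbedding.ofStrictMono f fun i j => (chiRank_comp_lt_iff χ f i j).1

def blockEmb (V : Finset (Fin n)) : Fin #V ↪o Fin n := V.orderEmbOfFin rfl

lemma range_chiEmb_blockEmb (V : Finset (ChiOrder χ)) : Set.range (chiEmb χ (blockEmb V)) = V :=
  range_orderEmbOfFin (α := Fin n) V rfl

end ChiOrder

section RunPartition

variable {n : ℕ} (χ : Fin n → Bool) {K : Type*} (ω : Fin n → K)

/-- The partition `π_{ω,χ}`. -/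
noncomputable def runPartition : Finset (Finset (ChiOrder χ)) :=
  intervalPartition (runCuts (α := ChiOrder χ) ω)

lemma isMaxKernelBI_runPartition : IsMaxKernelBI χ ω (runPartition χ ω) := by
  refine ⟨intervalPartition_mem_BIset _, ?_, ?_⟩
  · intro V hV i hi j hj
    exact eq_of_mem_intervalPartition_runCuts (α := ChiOrder χ) hV hi hj
  · intro Q hQ hker W hW
    obtain ⟨⟨hQ0, -⟩, hint⟩ := mem_BIset_iff.1 hQ
    obtain ⟨i, hi⟩ := nonempty_iff_ne_empty.2 (ne_of_mem_of_not_mem hW hQ0)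
    exact ⟨_, fiber_mem_fibers _ _, subset_fiber_cutsBelow_runCuts (α := ChiOrder χ)
      (isChiInterval_iff_ordConnected.1 (hint W hW)) hi (hker W hW)⟩

lemma Refines.subset {P Q : Finset (Finset (Fin n))} (hP : IsPartition P) (hPQ : Refines P Q)
    (hQP : Refines Q P) : P ⊆ Q := by
  intro V hV
  obtain ⟨W, hW, hVW⟩ := hPQ V hV
  obtain ⟨V', hV', hWV'⟩ := hQP W hW
  obtain ⟨i, hi⟩ := nonempty_iff_ne_empty.2 (ne_of_mem_of_not_mem hV hP.1)
  have hVV' : V = V' := (hP.2 i).unique ⟨hV, hi⟩ ⟨hV', hWV' (hVW hi)⟩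
  rwa [hVW.antisymm (hVV' ▸ hWV')]

lemma IsMaxKernelBI.eq_runPartition {P : Finset (Finset (Fin n))} (h : IsMaxKernelBI χ ω P) :
    P = runPartition χ ω := by
  obtain ⟨hP, hker, hmax⟩ := h
  have hR := isMaxKernelBI_runPartition χ ω
  have hPpart := (mem_BIset_iff.1 hP).1
  have hRpart := (mem_BIset_iff.1 hR.1).1
  exact (Refines.subset hPpart (hR.2.2 P hP hker) (hmax _ hR.1 hR.2.1)).antisymm
    (Refines.subset hRpart (hmax _ hR.1 hR.2.1) (hR.2.2 P hP hker))

end RunPartition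

section Moments

variable {A : Type*} [Monoid A] (φ : A → ℂ) {n m : ℕ} (a : Fin n → A)

lemma phiV_univ : phiV φ a univ = φ (List.ofFn a).prod := by
  rw [phiV, Fin.sort_univ, ← List.ofFn_eq_map]

lemma phiV_map (f : Fin m ↪o Fin n) (W : Finset (Fin m)) :
    phiV φ a (W.map f.toEmbedding) = phiV φ (a ∘ f) W := by
  rw [phiV, phiV, ← StrictMonoOn.map_finsetSort f.toEmbedding W (f.strictMono.strictMonoOn _),
    List.map_map]
  rfl

lemma phiV_eq_ofFn (V : Finset (Fin n)) : phiV φ a V = φ (List.ofFn (a ∘ blockEmb V)).prod := by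
  conv_lhs => rw [← map_orderEmbOfFin_univ V rfl]
  rw [phiV_map, phiV_univ]
  rfl

variable (χ : Fin n → Bool) {K : Type*} (ω : Fin n → K)

lemma prod_phiV_runPartition_of_forall_eq [NeZero n] (hω : ∀ i j, ω i = ω j) :
    ∏ W ∈ runPartition χ ω, phiV φ a W = φ (List.ofFn a).prod := by
  rw [runPartition, (runCuts_eq_empty_iff (α := ChiOrder χ)).2 hω, intervalPartition_empty]
  exact (prod_singleton _ _).trans (phiV_univ φ a)

lemma prod_phiV_intervalPartition_eq_union_runCuts (C : Finset (ChiOrder χ))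
    (hfac : ∀ V ∈ intervalPartition C, φ (List.ofFn (a ∘ blockEmb V)).prod =
      ∏ W ∈ runPartition (χ ∘ blockEmb V) (ω ∘ blockEmb V), phiV φ (a ∘ blockEmb V) W) :
    ∏ V ∈ intervalPartition C, phiV φ a V =
      ∏ W ∈ intervalPartition (C ∪ runCuts (α := ChiOrder χ) ω), phiV φ a W := by
  refine (prod_congr rfl fun V hV => ?_).trans (prod_intervalPartition_union C _ _).symm
  let e := chiEmb χ (blockEmb V)
  calc phiV φ a V
      = ∏ W ∈ runPartition (χ ∘ blockEmb V) (ω ∘ blockEmb V), phiV φ (a ∘ blockEmb V) W :=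
        (phiV_eq_ofFn φ a V).trans (hfac V hV)
    _ = ∏ W ∈ (runPartition (χ ∘ blockEmb V) (ω ∘ blockEmb V)).image (map e.toEmbedding),
          phiV φ a W :=
        ((prod_image (map_injective _).injOn).trans
          (prod_congr rfl fun W _ => phiV_map φ a (blockEmb V) W)).symm
    _ = _ := congrArg (fun P => ∏ W ∈ P, phiV φ a W)
        (image_map_intervalPartition_runCuts_comp hV e (range_chiEmb_blockEmb χ V))

end Moments

section Cumulants

variable {A : Type*} [Monoid A] (φ : A → ℂ) {n : ℕ} {χ : Fin n → Bool} (a : Fin n → A)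

open Classical in
lemma sum_powerset_eq_Bcum [NeZero n] :
    ∑ C ∈ (univ.filter fun j : ChiOrder χ => ¬IsMin j).powerset,
      (-1) ^ #C * ∏ V ∈ intervalPartition C, phiV φ a V = Bcum φ χ a := by
  have hcuts : ∀ {C : Finset (ChiOrder χ)},
      C ∈ (univ.filter fun j => ¬IsMin j).powerset ↔ ∀ c ∈ C, ¬IsMin c := by
    simp [subset_iff]
  refine sum_nbij' intervalPartition (fun P => runCuts (α := ChiOrder χ) (blocksContaining P))
    (fun C _ => intervalPartition_mem_BIset C) (fun P _ => hcuts.2 fun c hc =>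
      not_isMin_of_mem_runCuts hc) (fun C hC => runCuts_blocksContaining_intervalPartition
      (hcuts.1 hC)) (fun P hP => ?_) (fun C hC => ?_)
  · obtain ⟨⟨hP0, hP⟩, hint⟩ := mem_BIset_iff.1 hP
    exact intervalPartition_runCuts_blocksContaining (α := ChiOrder χ) hP0 hP
      fun V hV => isChiInterval_iff_ordConnected.1 (hint V hV)
  · have hcard : #(intervalPartition C) - 1 = #C := by
      rw [card_intervalPartition (hcuts.1 hC), Nat.add_sub_cancel]
    exact congrArg (fun k => (-1 : ℂ) ^ k * ∏ V ∈ intervalPartition C, phiV φ a V) hcard.symm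

variable {K : Type*} {ω : Fin n → K}

lemma Bcum_eq_sub_prod_runPartition (hω : ¬∀ i j, ω i = ω j)
    (hfac : ∀ C : Finset (ChiOrder χ), C.Nonempty → (∀ c ∈ C, ¬IsMin c) →
      ∀ V ∈ intervalPartition C, φ (List.ofFn (a ∘ blockEmb V)).prod =
        ∏ W ∈ runPartition (χ ∘ blockEmb V) (ω ∘ blockEmb V), phiV φ (a ∘ blockEmb V) W) :
    Bcum φ χ a = φ (List.ofFn a).prod - ∏ W ∈ runPartition χ ω, phiV φ a W := by
  have : NeZero n := ⟨by rintro rfl; exact hω fun i => i.elim0⟩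
  refine (sum_powerset_eq_Bcum φ a).symm.trans ?_
  refine (sum_powerset_neg_one_pow_card_mul_eq_sub
    (runCuts_subset_filter_not_isMin (α := ChiOrder χ))
    (nonempty_iff_ne_empty.2 (mt (runCuts_eq_empty_iff (α := ChiOrder χ)).1 hω)) _ fun C hC hCne =>
      prod_phiV_intervalPartition_eq_union_runCuts φ a χ ω C
        (hfac C hCne fun c hc => by simpa using mem_powerset.1 hC hc)).trans ?_
  rw [intervalPartition_empty]
  exact congrArg (· - _) ((prod_singleton _ _).trans (phiV_univ φ a))

end Cumulants

lemma biBooleanIndep_iff_forall_prod_runPartition {A : Type*} [Ring A] [Algebra ℂ A]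
    (φ : A → ℂ) {K : Type*} (Al Ar : K → NonUnitalSubalgebra ℂ A) :
    BiBooleanIndep φ Al Ar ↔ ∀ n : ℕ, 1 ≤ n → ∀ χ : Fin n → Bool, ∀ ω : Fin n → K,
      ∀ a : Fin n → A, (∀ i, a i ∈ (if χ i then Al (ω i) else Ar (ω i))) →
        φ (List.ofFn a).prod = ∏ W ∈ runPartition χ ω, phiV φ a W := by
  refine forall₂_congr fun n _ => forall₄_congr fun χ ω a _ =>
    ⟨fun h => h _ (isMaxKernelBI_runPartition χ ω), fun h P hP => ?_⟩
  rw [hP.eq_runPartition]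
  exact h

theorem biBooleanIndep_iff_mixed_cumulants_vanish_general
    {A : Type*} [Ring A] [Algebra ℂ A] (φ : A →ₗ[ℂ] ℂ)
    {K : Type*} (Al Ar : K → NonUnitalSubalgebra ℂ A) :
    BiBooleanIndep (fun z => φ z) Al Ar ↔
      ∀ n : ℕ, 2 ≤ n → ∀ χ : Fin n → Bool, ∀ ω : Fin n → K,
        (¬ ∀ i j : Fin n, ω i = ω j) → ∀ a : Fin n → A,
        (∀ i, a i ∈ (if χ i then Al (ω i) else Ar (ω i))) →
        Bcum (fun z => φ z) χ a = 0 := by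
  rw [biBooleanIndep_iff_forall_prod_runPartition]
  constructor
  · intro hfac n hn χ ω hω a ha
    rw [Bcum_eq_sub_prod_runPartition _ a hω fun C _ _ V hV => hfac _
      (card_pos.2 (nonempty_of_mem_fibers hV)) _ _ _ fun i => ha _,
      hfac n (by omega) χ ω a ha, sub_self]
  · intro hvan n
    induction n using Nat.strong_induction_on with
    | _ n ih =>
    intro hn χ ω a ha
    by_cases hω : ∀ i j, ω i = ω j
    · have : NeZero n := ⟨by omega⟩
      exact (prod_phiV_runPartition_of_forall_eq _ a χ ω hω).symm
    · obtain ⟨i, j, hij⟩ : ∃ i j, ω i ≠ ω j := by simpa using hω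
      have hB := hvan n (Fin.nontrivial_iff_two_le.1 (nontrivial_of_ne i j (ne_of_apply_ne ω hij)))
        χ ω hω a ha
      rw [Bcum_eq_sub_prod_runPartition _ a hω fun C hCne hC V hV => ih _
        ((card_lt_of_mem_intervalPartition hC hCne hV).trans_eq (card_chiOrder χ))
        (card_pos.2 (nonempty_of_mem_fibers hV)) _ _ _ fun i => ha _] at hB
      exact sub_eq_zero.1 hB

/-- A family of pairs of (not necessarily unital) subalgebras of a non-commutative
probability space is bi-Boolean independent iff all its mixed Boolean (l,r)-cumulants
vanish. -/
theorem biBooleanIndep_iff_mixed_cumulants_vanish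
    {A : Type*} [Ring A] [Algebra ℂ A] (φ : A →ₗ[ℂ] ℂ) (hφ1 : φ 1 = 1)
    {K : Type*} (Al Ar : K → NonUnitalSubalgebra ℂ A) :
    BiBooleanIndep (fun z => φ z) Al Ar ↔
      ∀ n : ℕ, 2 ≤ n → ∀ χ : Fin n → Bool, ∀ ω : Fin n → K,
        (¬ ∀ i j : Fin n, ω i = ω j) → ∀ a : Fin n → A,
        (∀ i, a i ∈ (if χ i then Al (ω i) else Ar (ω i))) →
        Bcum (fun z => φ z) χ a = 0 :=
  biBooleanIndep_iff_mixed_cumulants_vanish_general φ Al Ar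
end

section
/- Fix n ≥ 1 and χ : {1,…,n} → {l,r}, and define χ̂ : {1,…,2n} → {l,r} by χ̂(2k−1) = χ̂(2k) = χ(k) for k = 1,…,n. For a set partition π of {1,…,n}, let π̂ be the set partition of {1,…,2n} obtained by replacing each element k by the pair {2k−1, 2k} (so that 2i−1, 2i, 2j−1, 2j lie in one block of π̂ exactly when i and j lie in one block of π). Then: (a) if π ∈ BI(χ), then π̂ ∈ BI(χ̂); and (b) a partition ρ ∈ BI(χ̂) is of the form π̂ for some π ∈ BI(χ) if and only if every block of ρ has even cardinality. -/
open scoped BigOperators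

/-- The doubling `χ̂` of `χ`. -/
def hatChi {n : ℕ} (χ : Fin n → Bool) : Fin (2 * n) → Bool :=
  fun i => χ ⟨i.val / 2, by omega⟩

/-- Replace each element `k` (0-indexed) of a block by the pair `{2k, 2k+1}`. -/
def hatBlock {n : ℕ} (V : Finset (Fin n)) : Finset (Fin (2 * n)) :=
  V.biUnion (fun k =>
    {⟨2 * k.val, by have := k.isLt; omega⟩, ⟨2 * k.val + 1, by have := k.isLt; omega⟩})

/-- The doubled partition `π̂`. -/
def hatPartition {n : ℕ} (P : Finset (Finset (Fin n))) : Finset (Finset (Fin (2 * n))) :=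
  P.image hatBlock

namespace HatAux

variable {n m : ℕ}

def half (x : Fin (2*n)) : Fin n := ⟨x.val / 2, by have := x.isLt; omega⟩

def partner (x : Fin (2*n)) : Fin (2*n) :=
  if h : x.val % 2 = 0 then ⟨x.val+1, by have := x.isLt; omega⟩
  else ⟨x.val-1, by have := x.isLt; omega⟩

lemma half_partner (x : Fin (2*n)) : half (partner x) = half x := by
  unfold half partner; split <;> (apply Fin.ext; simp; omega)

lemma partner_ne (x : Fin (2*n)) : partner x ≠ x := by
  unfold partner; split <;> intro h <;> have hv := congrArg Fin.val h <;> simp at hv <;> omega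

lemma partner_partner (x : Fin (2*n)) : partner (partner x) = x := by
  have hlt := x.isLt
  apply Fin.ext
  unfold partner
  by_cases h : x.val % 2 = 0
  · rw [dif_pos h, dif_neg (show ¬((x.val + 1) % 2 = 0) by omega)]
    show x.val + 1 - 1 = x.val
    omega
  · rw [dif_neg h, dif_pos (show (x.val - 1) % 2 = 0 by omega)]
    show x.val - 1 + 1 = x.val
    omega

lemma eq_or_partner {z x : Fin (2*n)} (h : half z = half x) : z = x ∨ z = partner x := by
  have hv : z.val / 2 = x.val / 2 := congrArg Fin.val h
  rcases eq_or_ne z.val x.val with he | he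
  · exact Or.inl (Fin.ext he)
  · right; apply Fin.ext; unfold partner; split <;> simp <;> omega

lemma chiRank_injective (χ : Fin m → Bool) : Function.Injective (chiRank χ) := by
  intro i j h
  have hi := i.isLt; have hj := j.isLt
  unfold chiRank at h
  apply Fin.ext
  rcases hχi : χ i <;> rcases hχj : χ j <;> simp [hχi, hχj] at h <;> omega

lemma hatChi_apply (χ : Fin n → Bool) (x : Fin (2*n)) : hatChi χ x = χ (half x) := rfl

lemma pair_lt (χ : Fin n → Bool) {x y : Fin (2*n)}
    (h : chiRank χ (half x) < chiRank χ (half y)) :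
    chiRank (hatChi χ) x < chiRank (hatChi χ) y := by
  have hx := x.isLt; have hy := y.isLt
  have hhx : (half x).val = x.val / 2 := rfl
  have hhy : (half y).val = y.val / 2 := rfl
  have hxl := (half x).isLt; have hyl := (half y).isLt
  unfold chiRank at *
  rw [hatChi_apply, hatChi_apply]
  rcases hχx : χ (half x) <;> rcases hχy : χ (half y) <;>
    simp [hχx, hχy] at h ⊢ <;> omega

lemma half_rank_le (χ : Fin n → Bool) {x y : Fin (2*n)}
    (h : chiRank (hatChi χ) x < chiRank (hatChi χ) y) :
    chiRank χ (half x) ≤ chiRank χ (half y) := by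
  by_contra hc
  push_neg at hc
  exact absurd h (not_lt_of_gt (pair_lt χ hc))

noncomputable def pos (χ : Fin m → Bool) (x : Fin m) : ℕ :=
  (Finset.univ.filter fun y => chiRank χ y < chiRank χ x).card

lemma pos_lt_pos (χ : Fin m → Bool) {x y : Fin m} (h : chiRank χ x < chiRank χ y) :
    pos χ x < pos χ y := by
  apply Finset.card_lt_card
  constructor
  · intro z hz
    simp only [Finset.mem_filter, Finset.mem_univ, true_and] at hz ⊢
    omega
  · intro hsub
    have hx : x ∈ Finset.univ.filter fun z => chiRank χ z < chiRank χ y := by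
      simp [h]
    have := hsub hx
    simp at this

lemma pos_injective (χ : Fin m → Bool) : Function.Injective (pos χ) := by
  intro x y h
  by_contra hne
  have : chiRank χ x ≠ chiRank χ y := fun hc => hne (chiRank_injective χ hc)
  rcases lt_or_gt_of_ne this with hlt | hlt
  · exact absurd h (Nat.ne_of_lt (pos_lt_pos χ hlt))
  · exact absurd h.symm (Nat.ne_of_lt (pos_lt_pos χ hlt))

lemma rank_lt_of_pos_lt (χ : Fin m → Bool) {x y : Fin m} (h : pos χ x < pos χ y) :
    chiRank χ x < chiRank χ y := by
  by_contra hc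
  push_neg at hc
  rcases eq_or_lt_of_le hc with he | hlt
  · have := congrArg (pos χ) (chiRank_injective χ he.symm); omega
  · exact absurd h (not_lt_of_gt (pos_lt_pos χ hlt))

lemma pos_lt (χ : Fin m → Bool) (x : Fin m) : pos χ x < m := by
  have hsub : (Finset.univ.filter fun y => chiRank χ y < chiRank χ x) ⊆
      Finset.univ.erase x := by
    intro z hz
    simp only [Finset.mem_filter, Finset.mem_univ, true_and] at hz
    simp only [Finset.mem_erase, Finset.mem_univ, and_true]
    intro hzx; rw [hzx] at hz; omega
  have := Finset.card_le_card hsub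
  rw [Finset.card_erase_of_mem (Finset.mem_univ x)] at this
  simp only [Finset.card_univ, Fintype.card_fin] at this
  have := x.isLt
  unfold pos
  omega

lemma pos_surjective (χ : Fin m → Bool) {p : ℕ} (hp : p < m) : ∃ x : Fin m, pos χ x = p := by
  have hb : Function.Bijective (fun x : Fin m => (⟨pos χ x, pos_lt χ x⟩ : Fin m)) := by
    rw [Fintype.bijective_iff_injective_and_card]
    exact ⟨fun x y h => pos_injective χ (by simpa [Fin.ext_iff] using h), rfl⟩
  obtain ⟨x, hx⟩ := hb.surjective ⟨p, hp⟩
  exact ⟨x, by simpa [Fin.ext_iff] using hx⟩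

open scoped Classical in
lemma card_pos_lt (χ : Fin m → Bool) {p : ℕ} (hp : p ≤ m) :
    (Finset.univ.filter fun z : Fin m => pos χ z < p).card = p := by
  classical
  have himg : (Finset.univ.filter fun z : Fin m => pos χ z < p).image (pos χ) =
      Finset.range p := by
    ext q
    simp only [Finset.mem_image, Finset.mem_filter, Finset.mem_univ, true_and,
      Finset.mem_range]
    constructor
    · rintro ⟨x, hx, rfl⟩; exact hx
    · intro hq
      obtain ⟨x, hx⟩ := pos_surjective χ (lt_of_lt_of_le hq hp)
      exact ⟨x, by omega, hx⟩
  have := Finset.card_image_of_injective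
    (Finset.univ.filter fun z : Fin m => pos χ z < p) (pos_injective χ)
  rw [himg, Finset.card_range] at this
  omega

/-- The positions of a nonempty χ-interval form `Ico p (p + card)`. -/
lemma interval_pos_Ico (χ : Fin m → Bool) {V : Finset (Fin m)}
    (hV : IsChiInterval χ V) (hne : V.Nonempty) :
    ∃ p, ∀ x : Fin m, x ∈ V ↔ p ≤ pos χ x ∧ pos χ x < p + V.card := by
  classical
  set S := V.image (pos χ) with hS
  have hSne : S.Nonempty := hne.image _
  set p := S.min' hSne with hp
  set M := S.max' hSne with hM
  have hcardS : S.card = V.card := Finset.card_image_of_injective V (pos_injective χ)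
  have hconv : ∀ q, p ≤ q → q ≤ M → q ∈ S := by
    intro q hpq hqM
    obtain ⟨xm, hxm, hxmp⟩ := Finset.mem_image.mp (S.min'_mem hSne)
    obtain ⟨xM, hxM, hxMp⟩ := Finset.mem_image.mp (S.max'_mem hSne)
    have hqm : q < m := by
      have := pos_lt χ xM
      omega
    obtain ⟨y, hy⟩ := pos_surjective χ hqm
    have hyV : y ∈ V := by
      rcases eq_or_lt_of_le hpq with he | hlt
      · rwa [pos_injective χ (by omega : pos χ xm = pos χ y)] at hxm
      · rcases eq_or_lt_of_le hqM with he | hlt2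
        · rwa [pos_injective χ (by omega : pos χ xM = pos χ y)] at hxM
        · exact hV xm y xM hxm hxM (rank_lt_of_pos_lt χ (by omega))
            (rank_lt_of_pos_lt χ (by omega))
    exact Finset.mem_image.mpr ⟨y, hyV, hy⟩
  have hScc : S = Finset.Icc p M := by
    apply Finset.Subset.antisymm
    · intro q hq
      exact Finset.mem_Icc.mpr ⟨S.min'_le q hq, S.le_max' q hq⟩
    · intro q hq
      rw [Finset.mem_Icc] at hq
      exact hconv q hq.1 hq.2
  have hpM : p ≤ M := S.min'_le M (S.max'_mem hSne)
  have hcard : M + 1 - p = V.card := by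
    rw [← hcardS, hScc, Nat.card_Icc]
  refine ⟨p, fun x => ?_⟩
  constructor
  · intro hx
    have hxS : pos χ x ∈ S := Finset.mem_image.mpr ⟨x, hx, rfl⟩
    rw [hScc, Finset.mem_Icc] at hxS
    omega
  · intro ⟨h1, h2⟩
    have : pos χ x ∈ S := by
      rw [hScc, Finset.mem_Icc]; omega
    obtain ⟨y, hy, hyp⟩ := Finset.mem_image.mp this
    rwa [← pos_injective χ hyp]

lemma mem_hatBlock {V : Finset (Fin n)} {x : Fin (2*n)} :
    x ∈ hatBlock V ↔ half x ∈ V := by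
  unfold hatBlock
  rw [Finset.mem_biUnion]
  constructor
  · rintro ⟨k, hk, hx⟩
    simp only [Finset.mem_insert, Finset.mem_singleton] at hx
    have : half x = k := by
      rcases hx with rfl | rfl <;>
        (apply Fin.ext; simp [half]; try omega)
    rwa [this]
  · intro hx
    refine ⟨half x, hx, ?_⟩
    have hlt := x.isLt
    have h2 : (half x).val = x.val / 2 := rfl
    simp only [Finset.mem_insert, Finset.mem_singleton, Fin.ext_iff, h2]
    omega

lemma hatBlock_card (V : Finset (Fin n)) : (hatBlock V).card = 2 * V.card := by
  classical
  unfold hatBlock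
  rw [Finset.card_biUnion]
  · rw [Finset.sum_congr rfl (fun k _ => ?_), Finset.sum_const, smul_eq_mul, mul_comm]
    rw [Finset.card_insert_of_notMem, Finset.card_singleton]
    simp only [Finset.mem_singleton, Fin.ext_iff]
    omega
  · intro j _ k _ hjk
    simp only [Finset.disjoint_left, Finset.mem_insert, Finset.mem_singleton]
    rintro a (rfl | rfl) hb <;> rcases hb with hb | hb <;>
      (exfalso; apply hjk; apply Fin.ext;
        have hv := congrArg Fin.val hb; simp only [] at hv; omega)

open scoped Classical in
lemma pos_hat (χ : Fin n → Bool) (x : Fin (2*n)) :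
    pos (hatChi χ) x =
      2 * (Finset.univ.filter fun j : Fin n => chiRank χ j < chiRank χ (half x)).card
      + (if chiRank (hatChi χ) (partner x) < chiRank (hatChi χ) x then 1 else 0) := by
  classical
  set c := (Finset.univ.filter fun j : Fin n => chiRank χ j < chiRank χ (half x)).card with hc
  set Slt := (Finset.univ.filter fun z : Fin (2*n) =>
    chiRank χ (half z) < chiRank χ (half x)) with hSlt
  have hSltcard : Slt.card = 2 * c := by
    have : Slt = hatBlock (Finset.univ.filter fun j : Fin n =>
        chiRank χ j < chiRank χ (half x)) := by
      ext z
      rw [mem_hatBlock]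
      simp [hSlt]
    rw [this, hatBlock_card]
  have hpns : partner x ∉ Slt := by
    simp only [hSlt, Finset.mem_filter, Finset.mem_univ, true_and, half_partner]
    omega
  have hxns : x ∉ Slt := by
    simp only [hSlt, Finset.mem_filter, Finset.mem_univ, true_and]
    omega
  have hF : (Finset.univ.filter fun z : Fin (2*n) =>
      chiRank (hatChi χ) z < chiRank (hatChi χ) x) =
      if chiRank (hatChi χ) (partner x) < chiRank (hatChi χ) x
      then insert (partner x) Slt else Slt := by
    ext z
    simp only [Finset.mem_filter, Finset.mem_univ, true_and]
    by_cases hhz : half z = half x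
    · rcases eq_or_partner hhz with he | he <;> subst he
      · simp only [lt_irrefl, false_iff]
        intro hmem
        by_cases hcond : chiRank (hatChi χ) (partner z) < chiRank (hatChi χ) z
        · rw [if_pos hcond] at hmem
          rcases Finset.mem_insert.mp hmem with h | h
          · exact partner_ne z h.symm
          · exact hxns h
        · rw [if_neg hcond] at hmem
          exact hxns hmem
      · by_cases hcond : chiRank (hatChi χ) (partner x) < chiRank (hatChi χ) x
        · rw [if_pos hcond]
          exact iff_of_true hcond (Finset.mem_insert_self _ _)
        · rw [if_neg hcond]
          exact iff_of_false hcond hpns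
    · have hmem : z ∈ Slt ↔ chiRank χ (half z) < chiRank χ (half x) := by
        simp [hSlt]
      have hne : z ≠ partner x := by
        intro h; rw [h, half_partner] at hhz; exact hhz rfl
      have key : chiRank (hatChi χ) z < chiRank (hatChi χ) x ↔
          chiRank χ (half z) < chiRank χ (half x) := by
        constructor
        · intro h
          have hle := half_rank_le χ h
          rcases eq_or_lt_of_le hle with he | hlt
          · exact absurd (chiRank_injective χ he) hhz
          · exact hlt
        · exact pair_lt χ
      rw [key, ← hmem]
      by_cases hcond : chiRank (hatChi χ) (partner x) < chiRank (hatChi χ) x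
      · rw [if_pos hcond, Finset.mem_insert]
        simp [hne]
      · rw [if_neg hcond]
  unfold pos
  rw [hF]
  by_cases hcond : chiRank (hatChi χ) (partner x) < chiRank (hatChi χ) x
  · rw [if_pos hcond, if_pos hcond, Finset.card_insert_of_notMem hpns, hSltcard]
  · rw [if_neg hcond, if_neg hcond, hSltcard]
    omega

lemma pos_partner_div (χ : Fin n → Bool) (x : Fin (2*n)) :
    pos (hatChi χ) (partner x) / 2 = pos (hatChi χ) x / 2 := by
  classical
  have h1 := pos_hat χ x
  have h2 := pos_hat χ (partner x)
  rw [half_partner, partner_partner] at h2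
  have hrne : chiRank (hatChi χ) x ≠ chiRank (hatChi χ) (partner x) := by
    intro h
    exact partner_ne x (chiRank_injective (hatChi χ) h.symm)
  rcases lt_or_gt_of_ne hrne with hlt | hlt
  · rw [if_neg (not_lt_of_gt hlt)] at h1
    rw [if_pos hlt] at h2
    omega
  · rw [if_pos hlt] at h1
    rw [if_neg (not_lt_of_gt hlt)] at h2
    omega

lemma part_eq {m : ℕ} {ρ : Finset (Finset (Fin m))} (hP : IsPartition ρ)
    {B B' : Finset (Fin m)} (hB : B ∈ ρ) (hB' : B' ∈ ρ) {x : Fin m}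
    (hx : x ∈ B) (hx' : x ∈ B') : B = B' :=
  ((hP.2 x).unique ⟨hB, hx⟩ ⟨hB', hx'⟩)

open scoped Classical in
lemma pair_closed {χ : Fin n → Bool} {ρ : Finset (Finset (Fin (2*n)))}
    (hpart : IsPartition ρ) (hint : ∀ V ∈ ρ, IsChiInterval (hatChi χ) V)
    (heven : ∀ V ∈ ρ, Even V.card) {W : Finset (Fin (2*n))} (hW : W ∈ ρ)
    {x : Fin (2*n)} (hx : x ∈ W) : partner x ∈ W := by
  classical
  obtain ⟨p, hIco⟩ := interval_pos_Ico (hatChi χ) (hint W hW) ⟨x, hx⟩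
  have hxp := (hIco x).mp hx
  have hp2n : p < 2*n := lt_of_le_of_lt hxp.1 (pos_lt _ x)
  -- x0 : element of W at position p
  obtain ⟨x0, hx0p⟩ := pos_surjective (hatChi χ) hp2n
  have hx0W : x0 ∈ W := (hIco x0).mpr ⟨by omega, by omega⟩
  -- L = elements below position p is a union of blocks
  set L := (Finset.univ.filter fun z : Fin (2*n) => pos (hatChi χ) z < p) with hL
  have hblock : ∀ B ∈ ρ, ∀ z ∈ B, pos (hatChi χ) z < p → B ⊆ L := by
    intro B hB z hz hzp w hw
    simp only [hL, Finset.mem_filter, Finset.mem_univ, true_and]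
    by_contra hwp
    push_neg at hwp
    have hBW : B = W := by
      rcases eq_or_lt_of_le hwp with he | hlt
      · have : w = x0 := pos_injective (hatChi χ) (by omega)
        exact part_eq hpart hB hW (this ▸ hw) hx0W
      · rcases Nat.lt_or_ge (pos (hatChi χ) w) (p + W.card) with h | h
        · exact part_eq hpart hB hW hw ((hIco w).mpr ⟨by omega, h⟩)
        · have hx0B : x0 ∈ B :=
            hint B hB z x0 w hz hw (rank_lt_of_pos_lt _ (by omega))
              (rank_lt_of_pos_lt _ (by omega))
          exact part_eq hpart hB hW hx0B hx0W
    rw [hBW] at hz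
    have := (hIco z).mp hz
    omega
  have hLeq : L = (ρ.filter fun B => B ⊆ L).biUnion id := by
    apply Finset.Subset.antisymm
    · intro z hz
      obtain ⟨B, ⟨hB, hzB⟩, _⟩ := hpart.2 z
      have hzp : pos (hatChi χ) z < p := by
        simpa [hL] using hz
      refine Finset.mem_biUnion.mpr ⟨B, Finset.mem_filter.mpr ⟨hB, ?_⟩, hzB⟩
      exact hblock B hB z hzB hzp
    · intro z hz
      obtain ⟨B, hB, hzB⟩ := Finset.mem_biUnion.mp hz
      exact (Finset.mem_filter.mp hB).2 hzB
  have hpeven : Even p := by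
    have hLcard : L.card = p := card_pos_lt _ (le_of_lt hp2n)
    have hdisj : ∀ B ∈ ρ.filter (· ⊆ L), ∀ B' ∈ ρ.filter (· ⊆ L), B ≠ B' →
        Disjoint (id B) (id B') := by
      intro B hB B' hB' hne
      rw [Finset.disjoint_left]
      intro a ha ha'
      exact hne (part_eq hpart (Finset.mem_filter.mp hB).1 (Finset.mem_filter.mp hB').1 ha ha')
    have := Finset.card_biUnion hdisj
    rw [← hLeq, hLcard] at this
    rw [this]
    apply Finset.even_sum
    intro B hB
    exact heven B (Finset.mem_filter.mp hB).1
  have hWeven : Even W.card := heven W hW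
  have hdiv := pos_partner_div χ x
  have hne : pos (hatChi χ) (partner x) ≠ pos (hatChi χ) x :=
    fun h => partner_ne x (pos_injective _ h)
  apply (hIco (partner x)).mpr
  obtain ⟨r, hr⟩ := hpeven
  obtain ⟨t, ht⟩ := hWeven
  omega

def e0 (k : Fin n) : Fin (2*n) := ⟨2*k.val, by have := k.isLt; omega⟩

lemma half_e0 (k : Fin n) : half (e0 k) = k := by
  apply Fin.ext
  show 2 * k.val / 2 = k.val
  omega

end HatAux

/-- (a) Doubling maps bi-interval partitions relative to `χ` to bi-interval partitions
relative to `χ̂`; (b) a bi-interval partition relative to `χ̂` is a doubled bi-interval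
partition iff all of its blocks have even cardinality. -/

theorem hatPartition_BI {n : ℕ} (χ : Fin n → Bool) :
    (∀ P : Finset (Finset (Fin n)), P ∈ BIset χ → hatPartition P ∈ BIset (hatChi χ)) ∧
    (∀ ρ : Finset (Finset (Fin (2 * n))), ρ ∈ BIset (hatChi χ) →
      ((∃ P ∈ BIset χ, ρ = hatPartition P) ↔ ∀ V ∈ ρ, Even V.card)) := by
  classical
  open HatAux in
  have hmem : ∀ {m : ℕ} (ψ : Fin m → Bool) (P : Finset (Finset (Fin m))),
      P ∈ BIset ψ ↔ IsPartition P ∧ ∀ V ∈ P, IsChiInterval ψ V := by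
    intro m ψ P; simp [BIset]
  constructor
  · -- part (a)
    intro P hP
    rw [hmem] at hP ⊢
    obtain ⟨⟨hne, huniq⟩, hint⟩ := hP
    refine ⟨⟨?_, ?_⟩, ?_⟩
    · intro h
      obtain ⟨V, hV, hVe⟩ := Finset.mem_image.mp h
      rcases Finset.eq_empty_or_nonempty V with rfl | ⟨k, hk⟩
      · exact hne hV
      · have hx : HatAux.e0 k ∈ hatBlock V := by
          rw [HatAux.mem_hatBlock, HatAux.half_e0]; exact hk
        rw [hVe] at hx
        exact Finset.notMem_empty _ hx
    · intro x
      obtain ⟨V, ⟨hV, hxV⟩, hVu⟩ := huniq (HatAux.half x)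
      refine ⟨hatBlock V, ⟨Finset.mem_image_of_mem _ hV, HatAux.mem_hatBlock.mpr hxV⟩, ?_⟩
      rintro B ⟨hB, hxB⟩
      obtain ⟨V', hV', rfl⟩ := Finset.mem_image.mp hB
      rw [hVu V' ⟨hV', HatAux.mem_hatBlock.mp hxB⟩]
    · intro B hB
      obtain ⟨V, hV, rfl⟩ := Finset.mem_image.mp hB
      intro x y z hx hz hxy hyz
      rw [HatAux.mem_hatBlock] at hx hz ⊢
      have h1 : chiRank χ (HatAux.half x) ≤ chiRank χ (HatAux.half y) :=
        HatAux.half_rank_le χ hxy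
      have h2 : chiRank χ (HatAux.half y) ≤ chiRank χ (HatAux.half z) :=
        HatAux.half_rank_le χ hyz
      rcases eq_or_lt_of_le h1 with he | hlt1
      · rwa [← HatAux.chiRank_injective χ he]
      · rcases eq_or_lt_of_le h2 with he | hlt2
        · rwa [HatAux.chiRank_injective χ he]
        · exact hint V hV (HatAux.half x) (HatAux.half y) (HatAux.half z) hx hz hlt1 hlt2
  · -- part (b)
    intro ρ hρ
    rw [hmem] at hρ
    obtain ⟨hpart, hint⟩ := hρ
    constructor
    · rintro ⟨P, hP, rfl⟩ V hV
      obtain ⟨W, hW, rfl⟩ := Finset.mem_image.mp hV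
      rw [HatAux.hatBlock_card]
      exact ⟨W.card, by ring⟩
    · intro heven
      have hclosed : ∀ W ∈ ρ, ∀ x ∈ W, HatAux.partner x ∈ W :=
        fun W hW x hx => HatAux.pair_closed hpart hint heven hW hx
      have hback : ∀ W ∈ ρ, hatBlock (W.image HatAux.half) = W := by
        intro W hW
        ext x
        rw [HatAux.mem_hatBlock, Finset.mem_image]
        constructor
        · rintro ⟨w, hw, hww⟩
          rcases HatAux.eq_or_partner hww.symm with rfl | rfl
          · exact hw
          · exact hclosed W hW w hw
        · intro hx
          exact ⟨x, hx, rfl⟩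
      refine ⟨ρ.image (fun W => W.image HatAux.half), ?_, ?_⟩
      · rw [hmem]
        refine ⟨⟨?_, ?_⟩, ?_⟩
        · intro h
          obtain ⟨W, hW, hWe⟩ := Finset.mem_image.mp h
          rw [Finset.image_eq_empty] at hWe
          exact hpart.1 (hWe ▸ hW)
        · intro k
          obtain ⟨W, ⟨hW, hkW⟩, hWu⟩ := hpart.2 (HatAux.e0 k)
          refine ⟨W.image HatAux.half, ⟨Finset.mem_image_of_mem _ hW,
            Finset.mem_image.mpr ⟨HatAux.e0 k, hkW, HatAux.half_e0 k⟩⟩, ?_⟩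
          rintro B ⟨hB, hkB⟩
          obtain ⟨W', hW', rfl⟩ := Finset.mem_image.mp hB
          obtain ⟨w, hw, hwk⟩ := Finset.mem_image.mp hkB
          have hhw : HatAux.half w = HatAux.half (HatAux.e0 k) := by
            rw [hwk, HatAux.half_e0]
          have he0 : HatAux.e0 k ∈ W' := by
            rcases HatAux.eq_or_partner hhw.symm with he | he
            · rwa [he]
            · rw [he]
              exact hclosed W' hW' w hw
          rw [hWu W' ⟨hW', he0⟩]
        · intro B hB
          obtain ⟨W, hW, rfl⟩ := Finset.mem_image.mp hB
          intro i j k hi hk hij hjk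
          obtain ⟨x, hxW, rfl⟩ := Finset.mem_image.mp hi
          obtain ⟨z, hzW, rfl⟩ := Finset.mem_image.mp hk
          have hxy : chiLT (hatChi χ) x (HatAux.e0 j) := by
            apply HatAux.pair_lt
            rwa [HatAux.half_e0]
          have hyz : chiLT (hatChi χ) (HatAux.e0 j) z := by
            apply HatAux.pair_lt
            rwa [HatAux.half_e0]
          have hy : HatAux.e0 j ∈ W := hint W hW x (HatAux.e0 j) z hxW hzW hxy hyz
          exact Finset.mem_image.mpr ⟨HatAux.e0 j, hy, HatAux.half_e0 j⟩
      · unfold hatPartition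
        rw [Finset.image_image]
        symm
        calc ρ.image (hatBlock ∘ fun W => W.image HatAux.half)
            = ρ.image id := Finset.image_congr (fun W hW => hback W hW)
          _ = ρ := Finset.image_id
end

section
/- Let (A, φ) be a *-probability space in which every non-zero element has a non-zero *-distribution, i.e., for every a ∈ A with a ≠ 0 there exist n ≥ 1 and ω : {1,…,n} → {1,*} such that φ(a^{ω(1)} a^{ω(2)} ⋯ a^{ω(n)}) ≠ 0 (where a¹ = a and a^* is the adjoint of a). Then for every non-zero x ∈ A, the unital subalgebra Z(x) of M₂(A) and the scalar matrix algebra M₂(ℂ) are NOT Boolean independent over D₂ with respect to F₂. -/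
open scoped Matrix

section
variable {A : Type*} [Ring A] [Algebra ℂ A] [StarRing A]

/-- The conditional expectation `F₂` onto the diagonal scalar matrices:
`F₂([a_{ij}]) = diag(φ(a₁₁), φ(a₂₂))`, viewed inside `M₂(A)`. -/
noncomputable def F2 (φ : A → ℂ) (M : Matrix (Fin 2) (Fin 2) A) : Matrix (Fin 2) (Fin 2) A :=
  Matrix.diagonal (fun i => algebraMap ℂ A (φ (M i i)))

/-- The scalar matrices `M₂(ℂ)` inside `M₂(A)`. -/
def scalarMat (A : Type*) [Ring A] [Algebra ℂ A] : Set (Matrix (Fin 2) (Fin 2) A) :=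
  {M | ∃ B : Matrix (Fin 2) (Fin 2) ℂ, M = B.map (algebraMap ℂ A)}

/-- The diagonal scalar matrices `D₂` inside `M₂(A)`. -/
def diagScalarMat (A : Type*) [Ring A] [Algebra ℂ A] : Set (Matrix (Fin 2) (Fin 2) A) :=
  {M | ∃ a b : ℂ, M = Matrix.diagonal ![algebraMap ℂ A a, algebraMap ℂ A b]}

/-- The off-diagonal matrix `X` associated with `x`. -/
def Xmat (x : A) : Matrix (Fin 2) (Fin 2) A := !![0, x; star x, 0]

/-- `Z(x)`: the unital subalgebra of `M₂(A)` generated by `D₂` and `X`. -/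
def Zalg (x : A) : Subalgebra ℂ (Matrix (Fin 2) (Fin 2) A) :=
  Algebra.adjoin ℂ (diagScalarMat A ∪ {Xmat x})

/-- Boolean independence over `D₂` with respect to `F₂` of two subsets of `M₂(A)`:
`F₂` is multiplicative along alternating products of non-scalar elements. -/
def BoolIndepD2 (φ : A → ℂ) (B₁ B₂ : Set (Matrix (Fin 2) (Fin 2) A)) : Prop :=
  ∀ n : ℕ, 1 ≤ n → ∀ j : Fin n → Bool,
    (∀ i : Fin n, ∀ h : i.val + 1 < n, j i ≠ j ⟨i.val + 1, h⟩) →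
    ∀ Z : Fin n → Matrix (Fin 2) (Fin 2) A,
      (∀ i, Z i ∈ (if j i then B₁ else B₂) ∧
        ∀ c : ℂ, Z i ≠ c • (1 : Matrix (Fin 2) (Fin 2) A)) →
      F2 φ (List.ofFn Z).prod = (List.ofFn (fun i => F2 φ (Z i))).prod

end

section Aux

variable {A : Type*} [Ring A] [Algebra ℂ A] [StarRing A]

/-- The swap matrix `E` (a scalar matrix). -/
noncomputable def Emat (A : Type*) [Ring A] [Algebra ℂ A] : Matrix (Fin 2) (Fin 2) A :=
  (!![0, 1; 1, 0] : Matrix (Fin 2) (Fin 2) ℂ).map (algebraMap ℂ A)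

/-- The diagonal matrix `D = diag(1,2)` (a scalar matrix). -/
noncomputable def Dmat (A : Type*) [Ring A] [Algebra ℂ A] : Matrix (Fin 2) (Fin 2) A :=
  (!![1, 0; 0, 2] : Matrix (Fin 2) (Fin 2) ℂ).map (algebraMap ℂ A)

noncomputable def Smat (A : Type*) [Ring A] [Algebra ℂ A] (s : Bool) :
    Matrix (Fin 2) (Fin 2) A :=
  if s then Emat A else Dmat A

def rowOf : Bool → Fin 2
  | false => 0
  | true => 1

def letter (x : A) : Bool → A
  | false => x
  | true => star x

/-- The alternating sequence `X, S₀, X, S₁, …, X, S_{n-1}` associated with a word. -/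
noncomputable def seqL (x : A) (b₀ : Bool) : List Bool → List (Matrix (Fin 2) (Fin 2) A)
  | [] => []
  | b :: rest => Xmat x :: Smat A (b == rest.headD b₀) :: seqL x b₀ rest

lemma Emat_eq : Emat A = !![0, 1; 1, 0] := by
  ext i j
  fin_cases i <;> fin_cases j <;> simp [Emat]

lemma Dmat_eq : Dmat A = !![1, 0; 0, algebraMap ℂ A 2] := by
  ext i j
  fin_cases i <;> fin_cases j <;> simp [Dmat]

lemma XE_eq (x : A) : Xmat x * Emat A = !![x, 0; 0, star x] := by
  rw [Emat_eq, Xmat, Matrix.mul_fin_two]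
  norm_num

lemma XD_eq (x : A) : Xmat x * Dmat A = !![0, (2 : ℂ) • x; star x, 0] := by
  rw [Dmat_eq, Xmat, Matrix.mul_fin_two]
  have h2 : x * algebraMap ℂ A 2 = (2 : ℂ) • x := by
    rw [Algebra.smul_def, Algebra.commutes]
  norm_num [h2]

lemma seq_prod (x : A) (b₀ : Bool) (l : List Bool) :
    ∃ c : ℂ, c ≠ 0 ∧ (seqL x b₀ l).prod (rowOf (l.headD b₀)) (rowOf b₀)
      = c • (l.map (letter x)).prod := by
  induction l with
  | nil =>
    exact ⟨1, one_ne_zero, by simp [seqL, Matrix.one_apply_eq]⟩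
  | cons b rest ih =>
    obtain ⟨c, hc, hP⟩ := ih
    have key : (seqL x b₀ (b :: rest)).prod
        = (Xmat x * Smat A (b == rest.headD b₀)) * (seqL x b₀ rest).prod := by
      simp [seqL, mul_assoc]
    cases b <;> cases hb' : rest.headD b₀ <;> rw [hb'] at hP <;>
      simp only [rowOf] at hP <;> rw [List.headD_cons, key, hb']
    · refine ⟨c, hc, ?_⟩
      rw [show Smat A (false == false) = Emat A from rfl, XE_eq,
        Matrix.mul_apply, Fin.sum_univ_two]
      simp only [rowOf, letter, List.map_cons, List.prod_cons]
      simp [hP, mul_smul_comm]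
    · refine ⟨c * 2, by simpa using hc, ?_⟩
      rw [show Smat A (false == true) = Dmat A from rfl, XD_eq,
        Matrix.mul_apply, Fin.sum_univ_two]
      simp only [rowOf, letter, List.map_cons, List.prod_cons]
      simp [hP, mul_smul_comm, smul_mul_assoc, smul_smul]
    · refine ⟨c, hc, ?_⟩
      rw [show Smat A (true == false) = Dmat A from rfl, XD_eq,
        Matrix.mul_apply, Fin.sum_univ_two]
      simp only [rowOf, letter, List.map_cons, List.prod_cons]
      simp [hP, mul_smul_comm]
    · refine ⟨c, hc, ?_⟩
      rw [show Smat A (true == true) = Emat A from rfl, XE_eq,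
        Matrix.mul_apply, Fin.sum_univ_two]
      simp only [rowOf, letter, List.map_cons, List.prod_cons]
      simp [hP, mul_smul_comm]

lemma seq_get (x : A) (b₀ : Bool) :
    ∀ (l : List Bool) (i : ℕ) (h : i < (seqL x b₀ l).length),
      if i % 2 = 0 then (seqL x b₀ l)[i] = Xmat x
      else (seqL x b₀ l)[i] = Emat A ∨ (seqL x b₀ l)[i] = Dmat A := by
  intro l
  induction l with
  | nil => intro i h; simp [seqL] at h
  | cons b rest ih =>
    intro i h
    match i with
    | 0 => simp [seqL]
    | 1 =>
      simp only [seqL, Nat.one_mod, List.getElem_cons_succ, List.getElem_cons_zero]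
      norm_num
      unfold Smat
      split <;> simp
    | (i + 2) =>
      have h' : i < (seqL x b₀ rest).length := by
        simp only [seqL, List.length_cons] at h
        omega
      have := ih i h'
      have hm : (i + 2) % 2 = i % 2 := Nat.add_mod_right i 2
      simpa [seqL, hm, List.getElem_cons_succ] using this

end Aux

/-- In a `*`-probability space in which every non-zero element has a non-zero
`*`-distribution, for every non-zero `x` the unital algebra `Z(x)` and `M₂(ℂ)` are never
Boolean independent over `D₂` with respect to `F₂`. -/
theorem not_boolIndepD2_of_ne_zero
    {A : Type*} [Ring A] [Algebra ℂ A] [StarRing A] [StarModule ℂ A]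
    (φ : A →ₗ[ℂ] ℂ) (hφ1 : φ 1 = 1) (hφs : ∀ a : A, φ (star a) = starRingEnd ℂ (φ a))
    (hfaith : ∀ a : A, a ≠ 0 → ∃ n : ℕ, 1 ≤ n ∧ ∃ ω : Fin n → Bool,
      φ (List.ofFn (fun i => if ω i then star a else a)).prod ≠ 0)
    (x : A) (hx : x ≠ 0) :
    ¬ BoolIndepD2 (fun z => φ z) (Zalg x : Set (Matrix (Fin 2) (Fin 2) A))
      (scalarMat A) := by
  intro hB
  obtain ⟨n, hn, ω, hω⟩ := hfaith x hx
  have hA : Nontrivial A := ⟨⟨x, 0, hx⟩⟩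
  have hinj : Function.Injective (algebraMap ℂ A) := RingHom.injective _
  obtain ⟨m, rfl⟩ : ∃ m, n = m + 1 := ⟨n - 1, by omega⟩
  set b₀ : Bool := ω 0 with hb₀
  set l : List Bool := List.ofFn ω with hl
  have hcons : l = b₀ :: List.ofFn (fun i : Fin m => ω i.succ) := List.ofFn_succ (f := ω)
  set L : List (Matrix (Fin 2) (Fin 2) A) := seqL x b₀ l with hL
  set N : ℕ := L.length with hN
  have hN1 : 1 ≤ N := by
    rw [hN, hL, hcons]
    simp [seqL]
  -- nonscalarity lemmas
  have hXns : ∀ c : ℂ, Xmat x ≠ c • (1 : Matrix (Fin 2) (Fin 2) A) := by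
    intro c h
    have := congrFun (congrFun h 0) 1
    simp [Xmat, Matrix.one_apply] at this
    exact hx this
  have hEns : ∀ c : ℂ, Emat A ≠ c • (1 : Matrix (Fin 2) (Fin 2) A) := by
    intro c h
    have := congrFun (congrFun h 0) 1
    rw [Emat_eq] at this
    simp [Matrix.one_apply] at this
  have hDns : ∀ c : ℂ, Dmat A ≠ c • (1 : Matrix (Fin 2) (Fin 2) A) := by
    intro c h
    have h00 := congrFun (congrFun h 0) 0
    have h11 := congrFun (congrFun h 1) 1
    rw [Dmat_eq] at h00 h11
    simp [Matrix.one_apply, Algebra.smul_def] at h00 h11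
    have hc1 : (1 : ℂ) = c := hinj (by simpa using h00)
    have hc2 : (2 : ℂ) = c := hinj (by simpa using h11)
    rw [← hc1] at hc2
    norm_num at hc2
  -- apply Boolean independence
  have halt : ∀ i : Fin N, ∀ h : i.val + 1 < N,
      (fun i : Fin N => decide (i.val % 2 = 0)) i
        ≠ (fun i : Fin N => decide (i.val % 2 = 0)) ⟨i.val + 1, h⟩ := by
    intro i h hEq
    simp only [decide_eq_decide] at hEq
    omega
  have hZmem : ∀ i : Fin N,
      L.get i ∈ (if (fun i : Fin N => decide (i.val % 2 = 0)) i
          then (Zalg x : Set (Matrix (Fin 2) (Fin 2) A)) else scalarMat A) ∧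
        ∀ c : ℂ, L.get i ≠ c • (1 : Matrix (Fin 2) (Fin 2) A) := by
    intro i
    have hbd : i.val < (seqL x b₀ l).length := i.isLt
    have hg := seq_get x b₀ l i.val hbd
    have hget : L.get i = (seqL x b₀ l)[i.val]'hbd := rfl
    by_cases hpar : i.val % 2 = 0
    · rw [if_pos hpar] at hg
      rw [hget, hg]
      rw [if_pos (by simpa using hpar)]
      refine ⟨?_, hXns⟩
      exact Algebra.subset_adjoin (Or.inr rfl)
    · rw [if_neg hpar] at hg
      rw [hget]
      rw [if_neg (by simpa using hpar)]
      rcases hg with hg | hg <;> rw [hg]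
      · exact ⟨⟨_, rfl⟩, hEns⟩
      · exact ⟨⟨_, rfl⟩, hDns⟩
  have hEq := hB N hN1 (fun i : Fin N => decide (i.val % 2 = 0)) halt (fun i => L.get i) hZmem
  have hofn : List.ofFn (fun i : Fin N => L.get i) = L := List.ofFn_get L
  rw [hofn] at hEq
  -- RHS is zero
  have hF2X : F2 (fun z => φ z) (Xmat x) = 0 := by
    ext i j
    fin_cases i <;> fin_cases j <;> simp [F2, Xmat, Matrix.diagonal]
  have hz0 : L.get ⟨0, hN1⟩ = Xmat x := by
    have hbd : 0 < (seqL x b₀ l).length := hN1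
    have hg := seq_get x b₀ l 0 hbd
    have hget : L.get ⟨0, hN1⟩ = (seqL x b₀ l)[0]'hbd := rfl
    rw [hget]
    simpa using hg
  have hRHS : (List.ofFn (fun i : Fin N => F2 (fun z => φ z) (L.get i))).prod = 0 := by
    apply List.prod_eq_zero
    rw [List.mem_ofFn]
    exact ⟨⟨0, hN1⟩, by show F2 (fun z => φ z) (L.get ⟨0, hN1⟩) = 0; rw [hz0, hF2X]⟩
  rw [hRHS] at hEq
  -- LHS is nonzero
  obtain ⟨c, hc, hprod⟩ := seq_prod x b₀ l
  have hhead : l.headD b₀ = b₀ := by rw [hcons]; rfl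
  rw [hhead, ← hL] at hprod
  have hentry := congrFun (congrFun hEq (rowOf b₀)) (rowOf b₀)
  rw [F2] at hentry
  rw [Matrix.diagonal_apply_eq] at hentry
  simp only [Matrix.zero_apply] at hentry
  have hφ0 : φ (L.prod (rowOf b₀) (rowOf b₀)) = 0 := by
    apply hinj
    rw [hentry, map_zero]
  rw [hprod, map_smul, smul_eq_mul] at hφ0
  have hw : (l.map (letter x)).prod
      = (List.ofFn (fun i => if ω i then star x else x)).prod := by
    rw [hl, List.map_ofFn]
    have he : (letter x ∘ ω) = fun i => if ω i = true then star x else x := by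
      funext i; cases h : ω i <;> simp [letter, h]
    rw [he]
  rw [hw] at hφ0
  rcases mul_eq_zero.mp hφ0 with h | h
  · exact hc h
  · exact hω h
end

section
/- Let (A, φ) be a *-probability space, let x, y ∈ A, and let u ∈ A be a Haar unitary such that {u} and {x, y} are *-free. If φ(p) = 0 for every p ∈ P_{1,1}(x,y) ∪ P_{2,2}(x,y), then the pair (ux, uy) satisfies condition (3.6). -/
section
variable {A : Type*} [Ring A] [Algebra ℂ A] [StarRing A] [StarModule ℂ A]

/-- The alternating product `x^{ω(1)} ⋯ x^{ω(k₁)} y^{ω(k₁+1)} ⋯ y^{ω(m)}`: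
the first `k₁` letters are from `{x, x*}`, the remaining ones from `{y, y*}`,
with star-parities given by `ω` (`true` = starred). -/
def altProd (x y : A) (m k₁ : ℕ) (ω : Fin m → Bool) : A :=
  (List.ofFn (fun t : Fin m =>
    if t.val < k₁ then (if ω t then star x else x)
    else (if ω t then star y else y))).prod

/-- The factor of the sets `P_{i,j}(x,y)`: for odd length the alternating product itself,
for even length the centered alternating product `z - φ(z)·1`. -/
noncomputable def facElt (φ : A → ℂ) (x y : A) (m k₁ : ℕ) (ω : Fin m → Bool) : A :=
  if Odd m then altProd x y m k₁ ω
  else altProd x y m k₁ ω - φ (altProd x y m k₁ ω) • (1 : A)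

/-- Condition (3.6): the expectations of the admissible products
`p_{i₁,i₂} p_{i₂,i₃} ⋯ p_{i_{n-1},i_n}` of factors from the sets `P_{i,j}(x,y)` vanish.
Factor `i` is an alternating word of length `len i ≥ 1` with `kk i` letters from
`{x, x*}` followed by `len i - kk i` letters from `{y, y*}`; the chain condition links the
second index of each factor with the first index of the next one; and the factors are
ordered so that either (i) the `x`-only factors precede the `y`-only factors, or (ii)
exactly one factor mixes letters of both types, with `x`-only factors before it and
`y`-only factors after it. -/
noncomputable def Condition36 (φ : A → ℂ) (x y : A) : Prop :=
  ∀ N : ℕ, 1 ≤ N → ∀ len kk : Fin N → ℕ, ∀ ω : (i : Fin N) → Fin (len i) → Bool,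
    (∀ i, 1 ≤ len i) →
    (∀ i, kk i ≤ len i) →
    (∀ i, (List.ofFn (ω i)).Chain' (· ≠ ·)) →
    (∀ i : Fin N, ∀ h : i.val + 1 < N,
      (List.ofFn (ω ⟨i.val + 1, h⟩)).headD false =
        (if Odd (len i) then (List.ofFn (ω i)).headD false
          else !(List.ofFn (ω i)).headD false)) →
    ((∃ m : ℕ, m ≤ N ∧ (∀ i : Fin N, i.val < m → kk i = len i) ∧
        (∀ i : Fin N, m ≤ i.val → kk i = 0)) ∨
     (∃ m : Fin N, (∀ i : Fin N, i.val < m.val → kk i = len i) ∧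
        0 < kk m ∧ kk m < len m ∧ (∀ i : Fin N, m.val < i.val → kk i = 0))) →
    φ (List.ofFn (fun i => facElt φ x y (len i) (kk i) (ω i))).prod = 0

/-- The pairs `(x, y)` and `(x', y')` have the same bi-`*`-distribution. -/
def SameBiDist (φ : A → ℂ) (x y x' y' : A) : Prop :=
  ∀ n : ℕ, 1 ≤ n → ∀ k : ℕ, k ≤ n → ∀ ω : Fin n → Bool,
    φ (altProd x y n k ω) = φ (altProd x' y' n k ω)

/-- A Haar unitary. -/
def IsHaarUnitary (φ : A → ℂ) (u : A) : Prop :=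
  u * star u = 1 ∧ star u * u = 1 ∧
  ∀ n : ℕ, 1 ≤ n → φ (u ^ n) = 0 ∧ φ ((star u) ^ n) = 0

/-- `*`-freeness of a family of subsets: alternating products of centered elements of the
generated unital `*`-subalgebras have zero expectation. -/
def FreeFamily (φ : A → ℂ) {ι : Type*} (S : ι → Set A) : Prop :=
  ∀ m : ℕ, 1 ≤ m → ∀ idx : Fin m → ι,
    (∀ i : Fin m, ∀ h : i.val + 1 < m, idx i ≠ idx ⟨i.val + 1, h⟩) →
    ∀ a : Fin m → A,
      (∀ i, a i ∈ StarAlgebra.adjoin ℂ (S (idx i)) ∧ φ (a i) = 0) →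
      φ (List.ofFn a).prod = 0

end

/-!
Because `u⋆ u = 1`, the `u`'s inside an alternating word in `u x, (u x)⋆ = x⋆ u⋆, u y, (u y)⋆`
cancel in pairs: the word equals the same word in `x, y`, preceded by `u` if it starts with an
unstarred letter and followed by `u⋆` if it ends with a starred one. Centering commutes with this
(`φ (u w u⋆) = φ w` by freeness), so every factor `p` for `(u x, u y)` is `u^ε p' u⋆^δ` with `p'`
the corresponding factor for `(x, y)`, which is centered: odd factors by hypothesis, even ones by
construction. The chaining of the indices `i_k` says precisely that consecutive factors meet
through exactly one `u` or `u⋆`, so the whole product is an alternating product of centered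
elements of the algebras generated by `u` and by `{x, y}`, and freeness kills it.
-/

theorem List.prod_ofFn_mul_mul_of_cancel {M : Type*} [Monoid M] {n : ℕ}
    (f g h : Fin (n + 1) → M) (hfh : ∀ i : Fin n, h i.castSucc * f i.succ = 1) :
    (ofFn fun i => f i * g i * h i).prod = f 0 * (ofFn g).prod * h (Fin.last n) := by
  induction n with
  | zero => simp
  | succ n ih =>
    have htail := ih (fun i => f i.succ) (fun i => g i.succ) (fun i => h i.succ)
      fun i => hfh i.succ
    have hcancel : h 0 * f (Fin.succ 0) = 1 := hfh 0
    rw [ofFn_succ, prod_cons, htail, ofFn_succ (f := g), prod_cons, Fin.succ_last]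
    simp only [mul_assoc]
    rw [← mul_assoc (h 0), hcancel, one_mul]

theorem apply_eq_xor_of_isChain_ofFn_ne {n : ℕ} {ω : Fin n → Bool}
    (hω : (List.ofFn ω).IsChain (· ≠ ·)) (i : Fin n) :
    ω i = xor (ω ⟨0, i.pos⟩) (decide (Odd (i : ℕ))) := by
  obtain ⟨i, hi⟩ := i
  induction i with
  | zero => simp
  | succ i ih =>
    have hstep := List.isChain_ofFn.mp hω i hi
    rw [ih (by omega)] at hstep
    revert hstep
    cases ω ⟨i + 1, hi⟩ <;> cases ω ⟨0, _⟩ <;> by_cases hodd : Odd i <;>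
      simp [hodd, Nat.odd_add_one]

theorem apply_last_eq_of_isChain_ofFn_ne {n : ℕ} {ω : Fin (n + 1) → Bool}
    (hω : (List.ofFn ω).IsChain (· ≠ ·)) :
    ω (Fin.last n) = if Odd (n + 1) then ω 0 else !ω 0 := by
  rw [apply_eq_xor_of_isChain_ofFn_ne hω (Fin.last n)]
  by_cases hodd : Odd n <;> simp [hodd, Nat.odd_add_one]

section HaarShift

variable {A : Type*} [Ring A] [StarRing A]

def uPrefix (u : A) (b : Bool) : A := if b then 1 else u

def uSuffix (u : A) (b : Bool) : A := if b then star u else 1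

theorem altProd_mul_left {u : A} (hu : star u * u = 1) (x y : A) {n : ℕ} (k : ℕ)
    {ω : Fin (n + 1) → Bool} (hω : (List.ofFn ω).IsChain (· ≠ ·)) :
    altProd (u * x) (u * y) (n + 1) k ω =
      uPrefix u (ω 0) * altProd x y (n + 1) k ω * uSuffix u (ω (Fin.last n)) := by
  unfold altProd
  rw [← List.prod_ofFn_mul_mul_of_cancel (fun t => uPrefix u (ω t)) _
    (fun t => uSuffix u (ω t))]
  · congr 2
    funext t
    split_ifs <;> simp_all [uPrefix, uSuffix, star_mul]
  · intro i
    have hne : ω i.castSucc ≠ ω i.succ := List.isChain_ofFn.mp hω i (by omega)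
    revert hne
    cases ω i.castSucc <;> cases ω i.succ <;> simp [uPrefix, uSuffix, hu]

/-- `uPrefix u h * a * uSuffix u t` as a word with its trivial letters dropped, each letter
tagged by its side of the free pair (`true` for `u`). -/
def haarPiece (u a : A) (h t : Bool) : List (A × Bool) :=
  (if h then [] else [(u, true)]) ++ (a, false) :: (if t then [(star u, true)] else [])

theorem haarPiece_ne_nil (u a : A) (h t : Bool) : haarPiece u a h t ≠ [] := by
  simp [haarPiece]

theorem prod_map_fst_haarPiece (u a : A) (h t : Bool) :
    ((haarPiece u a h t).map Prod.fst).prod = uPrefix u h * a * uSuffix u t := by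
  cases h <;> cases t <;> simp [haarPiece, uPrefix, uSuffix, mul_assoc]

theorem isChain_haarPiece (u a : A) (h t : Bool) :
    (haarPiece u a h t).IsChain (fun p q => p.2 ≠ q.2) := by
  cases h <;> cases t <;> simp [haarPiece]

theorem snd_of_mem_head?_haarPiece {u a : A} {h t : Bool} {p : A × Bool}
    (hp : p ∈ (haarPiece u a h t).head?) : p.2 = !h := by
  cases h <;> cases t <;> simp [haarPiece] at hp <;> simp [← hp]

theorem snd_of_mem_getLast?_haarPiece {u a : A} {h t : Bool} {p : A × Bool}
    (hp : p ∈ (haarPiece u a h t).getLast?) : p.2 = t := by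
  cases h <;> cases t <;> simp [haarPiece, List.getLast?_cons] at hp <;> simp [← hp]

theorem mem_haarPiece {u a : A} {h t : Bool} {p : A × Bool} (hp : p ∈ haarPiece u a h t) :
    p = (u, true) ∨ p = (a, false) ∨ p = (star u, true) := by
  cases h <;> cases t <;> simp [haarPiece] at hp <;> tauto

variable [Algebra ℂ A]

theorem apply_facElt_eq_zero {φ : A →ₗ[ℂ] ℂ} (hφ1 : φ 1 = 1) {x y : A} {m k : ℕ}
    {ω : Fin m → Bool} (hodd : Odd m → φ (altProd x y m k ω) = 0) :
    φ (facElt φ x y m k ω) = 0 := by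
  unfold facElt
  split_ifs with hm
  exacts [hodd hm, by simp [hφ1]]

variable [StarModule ℂ A]

theorem altProd_mem_adjoin (x y : A) (m k : ℕ) (ω : Fin m → Bool) :
    altProd x y m k ω ∈ StarAlgebra.adjoin ℂ {x, y} := by
  have hx : x ∈ StarAlgebra.adjoin ℂ {x, y} := StarAlgebra.subset_adjoin ℂ _ (by simp)
  have hy : y ∈ StarAlgebra.adjoin ℂ {x, y} := StarAlgebra.subset_adjoin ℂ _ (by simp)
  refine list_prod_mem fun z hz => ?_
  obtain ⟨t, rfl⟩ := List.mem_ofFn.mp hz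
  split_ifs
  exacts [star_mem hx, hx, star_mem hy, hy]

theorem facElt_mem_adjoin (φ : A → ℂ) (x y : A) (m k : ℕ) (ω : Fin m → Bool) :
    facElt φ x y m k ω ∈ StarAlgebra.adjoin ℂ {x, y} := by
  have hw := altProd_mem_adjoin x y m k ω
  unfold facElt
  split_ifs
  exacts [hw, sub_mem hw (SMulMemClass.smul_mem _ (one_mem _))]

theorem FreeFamily.apply_list_prod_eq_zero {φ : A → ℂ} {ι : Type*} {S : ι → Set A}
    (hS : FreeFamily φ S) {l : List (A × ι)} (hl : l ≠ [])
    (hchain : l.IsChain (fun p q => p.2 ≠ q.2))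
    (hmem : ∀ p ∈ l, p.1 ∈ StarAlgebra.adjoin ℂ (S p.2) ∧ φ p.1 = 0) :
    φ (l.map Prod.fst).prod = 0 := by
  have h := hS l.length (List.length_pos_iff.mpr hl) (fun i => l[(i : ℕ)].2)
    (fun i hi => List.isChain_iff_getElem.mp hchain i hi) (fun i => l[(i : ℕ)].1)
    (fun i => hmem _ (List.getElem_mem _))
  rwa [List.ofFn_getElem_eq_map] at h

theorem FreeFamily.apply_prod_haar_conj_eq_zero {φ : A → ℂ} {S : Bool → Set A}
    (hS : FreeFamily φ S) {u : A} (hu : u ∈ StarAlgebra.adjoin ℂ (S true))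
    (hφu : φ u = 0) (hφu' : φ (star u) = 0) {N : ℕ} (hN : 1 ≤ N) (a : Fin N → A)
    (ha : ∀ i, a i ∈ StarAlgebra.adjoin ℂ (S false) ∧ φ (a i) = 0) (h t : Fin N → Bool)
    (hlink : ∀ (i : Fin N) (hi : i.val + 1 < N), h ⟨i + 1, hi⟩ = t i) :
    φ (List.ofFn fun i => uPrefix u (h i) * a i * uSuffix u (t i)).prod = 0 := by
  set L := List.ofFn fun i => haarPiece u (a i) (h i) (t i)
  have hprod : (L.flatten.map Prod.fst).prod =
      (List.ofFn fun i => uPrefix u (h i) * a i * uSuffix u (t i)).prod := by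
    simp only [L, List.map_flatten, List.prod_flatten, List.map_ofFn, Function.comp_def,
      prod_map_fst_haarPiece]
  have hnil : [] ∉ L := by
    simp only [L, List.mem_ofFn, not_exists]
    exact fun i => haarPiece_ne_nil _ _ _ _
  rw [← hprod]
  refine hS.apply_list_prod_eq_zero ?_ ?_ ?_
  · rw [Ne, List.flatten_eq_nil_iff]
    exact fun hall => haarPiece_ne_nil u (a ⟨0, hN⟩) _ _
      (hall _ (List.mem_ofFn.mpr ⟨⟨0, hN⟩, rfl⟩))
  · refine (List.isChain_flatten hnil).mpr ⟨?_, List.isChain_ofFn.mpr fun i hi p hp q hq => ?_⟩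
    · simp only [L, List.mem_ofFn]
      rintro _ ⟨i, rfl⟩
      exact isChain_haarPiece _ _ _ _
    · rw [snd_of_mem_getLast?_haarPiece hp, snd_of_mem_head?_haarPiece hq,
        hlink ⟨i, by omega⟩ hi]
      exact (Bool.not_ne_self _).symm
  · intro p hp
    obtain ⟨_, hl, hpl⟩ := List.mem_flatten.mp hp
    obtain ⟨i, rfl⟩ := List.mem_ofFn.mp hl
    rcases mem_haarPiece hpl with rfl | rfl | rfl
    exacts [⟨hu, hφu⟩, ha i, ⟨star_mem hu, hφu'⟩]

theorem FreeFamily.apply_mul_mul_star {φ : A →ₗ[ℂ] ℂ} (hφ1 : φ 1 = 1) {S : Bool → Set A}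
    (hS : FreeFamily φ S) {u : A} (hu : u ∈ StarAlgebra.adjoin ℂ (S true))
    (hφu : φ u = 0) (hφu' : φ (star u) = 0) (huu : u * star u = 1) {a : A}
    (ha : a ∈ StarAlgebra.adjoin ℂ (S false)) :
    φ (u * a * star u) = φ a := by
  have hcentered := hS.apply_prod_haar_conj_eq_zero hu hφu hφu' le_rfl (fun _ => a - φ a • 1)
    (fun _ => ⟨sub_mem ha (SMulMemClass.smul_mem _ (one_mem _)), by simp [hφ1]⟩)
    (fun _ => false) (fun _ => true) (fun _ hi => absurd hi (by omega))
  simpa [uPrefix, uSuffix, mul_sub, sub_mul, huu, hφ1, sub_eq_zero] using hcentered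

theorem facElt_mul_left {φ : A →ₗ[ℂ] ℂ} {u x y : A} (hu : u * star u = 1)
    (hu' : star u * u = 1)
    (hconj : ∀ a ∈ StarAlgebra.adjoin ℂ {x, y}, φ (u * a * star u) = φ a)
    {m : ℕ} (hm : 1 ≤ m) (k : ℕ) {ω : Fin m → Bool} (hω : (List.ofFn ω).IsChain (· ≠ ·)) :
    facElt φ (u * x) (u * y) m k ω =
      uPrefix u ((List.ofFn ω).headD false) * facElt φ x y m k ω *
        uSuffix u (if Odd m then (List.ofFn ω).headD false else !(List.ofFn ω).headD false) := by
  obtain ⟨n, rfl⟩ := Nat.exists_eq_add_of_le' hm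
  rw [List.ofFn_succ, List.headD_cons, ← apply_last_eq_of_isChain_ofFn_ne hω]
  unfold facElt
  rw [altProd_mul_left hu' x y k hω]
  split_ifs with hodd
  · rfl
  · have hlast : ω (Fin.last n) = !ω 0 := by
      rw [apply_last_eq_of_isChain_ofFn_ne hω, if_neg hodd]
    have hw := hconj _ (altProd_mem_adjoin x y (n + 1) k ω)
    rw [hlast]
    cases ω 0
    · simp [uPrefix, uSuffix, hw, mul_sub, sub_mul, hu]
    · simp [uPrefix, uSuffix]

end HaarShift

theorem condition36_of_haar_shift_general
    {A : Type*} [Ring A] [Algebra ℂ A] [StarRing A] [StarModule ℂ A]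
    (φ : A →ₗ[ℂ] ℂ) (hφ1 : φ 1 = 1)
    (x y u : A) (hu : IsHaarUnitary (fun z => φ z) u)
    (hfree : FreeFamily (fun z => φ z) (fun b : Bool => if b then {u} else {x, y}))
    (hodd : ∀ m k₁ : ℕ, Odd m → k₁ ≤ m → ∀ ω : Fin m → Bool,
      (List.ofFn ω).Chain' (· ≠ ·) → φ (altProd x y m k₁ ω) = 0) :
    Condition36 (fun z => φ z) (u * x) (u * y) := by
  obtain ⟨huu, huu', hmoments⟩ := hu
  have hφu : φ u = 0 := by simpa using (hmoments 1 le_rfl).1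
  have hφu' : φ (star u) = 0 := by simpa using (hmoments 1 le_rfl).2
  have hu_mem : u ∈ StarAlgebra.adjoin ℂ ({u} : Set A) := StarAlgebra.subset_adjoin ℂ _ rfl
  have hconj : ∀ a ∈ StarAlgebra.adjoin ℂ {x, y}, φ (u * a * star u) = φ a :=
    fun a ha => hfree.apply_mul_mul_star hφ1 hu_mem hφu hφu' huu ha
  intro N hN len kk ω hlen hkk hω hlink _
  simp only [facElt_mul_left huu huu' hconj (hlen _) _ (hω _)]
  exact hfree.apply_prod_haar_conj_eq_zero hu_mem hφu hφu' hN _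
    (fun i => ⟨facElt_mem_adjoin _ x y _ _ _,
      apply_facElt_eq_zero hφ1 fun hm => hodd _ _ hm (hkk i) _ (hω i)⟩) _ _ hlink

/-- If all odd-length alternating products in `x, x*, y, y*` (the elements of
`P_{1,1}(x,y) ∪ P_{2,2}(x,y)`) have vanishing expectation, and `u` is a Haar unitary
`*`-free from `{x, y}`, then `(ux, uy)` satisfies condition (3.6). -/
theorem condition36_of_haar_shift
    {A : Type*} [Ring A] [Algebra ℂ A] [StarRing A] [StarModule ℂ A]
    (φ : A →ₗ[ℂ] ℂ) (hφ1 : φ 1 = 1) (hφs : ∀ a : A, φ (star a) = starRingEnd ℂ (φ a))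
    (x y u : A) (hu : IsHaarUnitary (fun z => φ z) u)
    (hfree : FreeFamily (fun z => φ z) (fun b : Bool => if b then {u} else {x, y}))
    (hodd : ∀ m k₁ : ℕ, Odd m → k₁ ≤ m → ∀ ω : Fin m → Bool,
      (List.ofFn ω).Chain' (· ≠ ·) → φ (altProd x y m k₁ ω) = 0) :
    Condition36 (fun z => φ z) (u * x) (u * y) :=
  condition36_of_haar_shift_general φ hφ1 x y u hu hfree hodd
end
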